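/- arXiv:2207.11505 — 10 statements merged into one kernel-verified Lean document; each statement's English description precedes it below -/
import Mathlib

section
/- Let Ω ⊆ ℝ² and let u : Ω → ℝ be a bounded doubly increasing function with diam u(Ω) ≤ r. Define D(u) as the set of points (x,y) ∈ Ω such that u(x,y) ∈ ℤ and u(x',y') < u(x,y) for every (x',y') ∈ Ω \ {(x,y)} with x' ≤ x and y' ≤ y. Then D(u) is a union of ⌊r⌋+1 decreasing sets. Moreover, if the image of u is contained in [0,r] and Ω is open, then D(u) is a union of ⌊r⌋ decreasing sets. -/
open Set

/-- A set of points in the plane is decreasing if for any two distinct points,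
`x < x'` iff `y > y'`. -/
def DecreasingPtSet (S : Set (ℝ × ℝ)) : Prop :=
  ∀ p ∈ S, ∀ q ∈ S, p ≠ q → (p.1 < q.1 ↔ q.2 < p.2)

/-- `DSet Ω u` is the set of points `p ∈ Ω` where `u p` is an integer and `u` takes
strictly smaller values at all other points of `Ω` to the south-west of `p`. -/
def DSet (Ω : Set (ℝ × ℝ)) (u : ℝ × ℝ → ℝ) : Set (ℝ × ℝ) :=
  {p ∈ Ω | (∃ n : ℤ, u p = n) ∧
    ∀ q ∈ Ω, q ≠ p → q.1 ≤ p.1 → q.2 ≤ p.2 → u q < u p}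

lemma level_dec (Ω : Set (ℝ × ℝ)) (u : ℝ × ℝ → ℝ) (c : ℝ) :
    DecreasingPtSet {p | p ∈ DSet Ω u ∧ u p = c} := by
  rintro p ⟨⟨hpΩ, -, hpstr⟩, hpc⟩ q ⟨⟨hqΩ, -, hqstr⟩, hqc⟩ hne
  constructor
  · intro h1
    by_contra h2
    push_neg at h2
    have := hqstr p hpΩ hne h1.le h2
    rw [hpc, hqc] at this
    exact lt_irrefl c this
  · intro h2
    by_contra h1
    push_neg at h1
    have := hpstr q hqΩ hne.symm h1 h2.le
    rw [hpc, hqc] at this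
    exact lt_irrefl c this

/-- If `u` is a bounded doubly increasing function on `Ω` whose image has diameter at
most `r`, then `DSet Ω u` is a union of `⌊r⌋+1` decreasing sets; if moreover `Ω` is
open and the values of `u` lie in `[0,r]`, it is a union of `⌊r⌋` decreasing sets. -/
theorem stmt2 (Ω : Set (ℝ × ℝ)) (u : ℝ × ℝ → ℝ) (r : ℝ) (hr : 0 ≤ r)
    (hmono : ∀ p ∈ Ω, ∀ q ∈ Ω, p.1 ≤ q.1 → p.2 ≤ q.2 → u p ≤ u q)
    (hbdd : Bornology.IsBounded (u '' Ω))
    (hdiam : Metric.diam (u '' Ω) ≤ r) :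
    (∃ D : Fin (⌊r⌋₊ + 1) → Set (ℝ × ℝ),
      (∀ i, DecreasingPtSet (D i)) ∧ DSet Ω u = ⋃ i, D i) ∧
    (u '' Ω ⊆ Set.Icc 0 r → IsOpen Ω →
      ∃ D : Fin ⌊r⌋₊ → Set (ℝ × ℝ),
        (∀ i, DecreasingPtSet (D i)) ∧ DSet Ω u = ⋃ i, D i) := by
  have hlev := level_dec Ω u
  have hdist : ∀ p ∈ DSet Ω u, ∀ q ∈ DSet Ω u, u p - u q ≤ r := by
    intro p hp q hq
    have h := Metric.dist_le_diam_of_mem hbdd ⟨p, hp.1, rfl⟩ ⟨q, hq.1, rfl⟩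
    rw [Real.dist_eq] at h
    exact (le_abs_self _).trans (h.trans hdiam)
  constructor
  · by_cases hD : DSet Ω u = ∅
    · refine ⟨fun _ => ∅, fun i p hp => absurd hp (notMem_empty p), by simp [hD]⟩
    · obtain ⟨p0, hp0⟩ := nonempty_iff_ne_empty.mpr hD
      have Hbdd : ∃ b : ℤ, ∀ n : ℤ, (∃ p ∈ DSet Ω u, u p = (n : ℝ)) → b ≤ n := by
        obtain ⟨b, hb⟩ := hbdd.bddBelow
        refine ⟨⌈b⌉, ?_⟩
        rintro n ⟨p, hp, hpn⟩
        have : b ≤ (n : ℝ) := hpn ▸ hb ⟨p, hp.1, rfl⟩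
        exact Int.ceil_le.mpr this
      have Hinh : ∃ n : ℤ, ∃ p ∈ DSet Ω u, u p = (n : ℝ) := by
        obtain ⟨n, hn⟩ := hp0.2.1
        exact ⟨n, p0, hp0, hn⟩
      obtain ⟨m0, ⟨q0, hq0, hq0v⟩, hm0min⟩ := Int.exists_least_of_bdd Hbdd Hinh
      refine ⟨fun i => {p | p ∈ DSet Ω u ∧ u p = ((m0 + (i : ℕ) : ℤ) : ℝ)},
        fun i => hlev _, ?_⟩
      ext p
      simp only [mem_iUnion]
      constructor
      · intro hp
        obtain ⟨n, hn⟩ := hp.2.1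
        have h0 : m0 ≤ n := hm0min n ⟨p, hp, hn⟩
        have h1 : (n : ℝ) - (m0 : ℝ) ≤ r := by
          have := hdist p hp q0 hq0
          rw [hn, hq0v] at this
          linarith
        have h2 : (n - m0).toNat ≤ ⌊r⌋₊ := by
          apply Nat.le_floor
          have : (((n - m0).toNat : ℤ) : ℝ) = (n : ℝ) - (m0 : ℝ) := by
            rw [Int.toNat_of_nonneg (by omega : (0 : ℤ) ≤ n - m0)]
            push_cast
            ring
          push_cast at this ⊢
          linarith
        refine ⟨⟨(n - m0).toNat, by omega⟩, hp, ?_⟩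
        rw [hn]
        have : ((m0 + ((n - m0).toNat : ℤ)) : ℝ) = (n : ℝ) := by
          rw [Int.toNat_of_nonneg (by omega : (0 : ℤ) ≤ n - m0)]
          push_cast
          ring
        simp only [Fin.val_mk]
        push_cast at this ⊢
        linarith
      · rintro ⟨i, hp, -⟩
        exact hp
  · intro himg hopen
    have hval : ∀ p ∈ DSet Ω u, ∀ n : ℤ, u p = (n : ℝ) → 1 ≤ n ∧ (n : ℝ) ≤ r := by
      rintro p ⟨hpΩ, -, hpstr⟩ n hn
      obtain ⟨ε, hε, hball⟩ := Metric.isOpen_iff.mp hopen p hpΩ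
      set q : ℝ × ℝ := (p.1 - ε / 2, p.2 - ε / 2) with hqdef
      have hqΩ : q ∈ Ω := by
        apply hball
        rw [Metric.mem_ball, Prod.dist_eq]
        have e1 : dist q.1 p.1 = ε / 2 := by
          rw [Real.dist_eq, hqdef]
          simp only
          rw [show p.1 - ε / 2 - p.1 = -(ε / 2) by ring, abs_neg,
            abs_of_nonneg (by linarith)]
        have e2 : dist q.2 p.2 = ε / 2 := by
          rw [Real.dist_eq, hqdef]
          simp only
          rw [show p.2 - ε / 2 - p.2 = -(ε / 2) by ring, abs_neg,
            abs_of_nonneg (by linarith)]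
        rw [e1, e2]
        simp only [max_self]
        linarith
      have hqne : q ≠ p := by
        intro h
        have := congrArg Prod.fst h
        rw [hqdef] at this
        simp only at this
        linarith
      have hlt : u q < u p := hpstr q hqΩ hqne (by rw [hqdef]; simp only; linarith)
        (by rw [hqdef]; simp only; linarith)
      have hq0 : (0 : ℝ) ≤ u q := (himg ⟨q, hqΩ, rfl⟩).1
      have hpr : u p ≤ r := (himg ⟨p, hpΩ, rfl⟩).2
      constructor
      · have : (0 : ℝ) < (n : ℝ) := by rw [← hn]; linarith
        exact_mod_cast Int.cast_pos.mp this
      · rw [← hn]; exact hpr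
    refine ⟨fun i => {p | p ∈ DSet Ω u ∧ u p = ((((i : ℕ) : ℤ) + 1 : ℤ) : ℝ)},
      fun i => hlev _, ?_⟩
    ext p
    simp only [mem_iUnion]
    constructor
    · intro hp
      obtain ⟨n, hn⟩ := hp.2.1
      obtain ⟨h1, h2⟩ := hval p hp n hn
      have hfl : n.toNat ≤ ⌊r⌋₊ := by
        apply Nat.le_floor
        have : ((n.toNat : ℤ) : ℝ) = (n : ℝ) := by
          rw [Int.toNat_of_nonneg (by omega : (0 : ℤ) ≤ n)]
        push_cast at this ⊢
        linarith
      have hnfloor : (n - 1).toNat < ⌊r⌋₊ := by omega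
      refine ⟨⟨(n - 1).toNat, hnfloor⟩, hp, ?_⟩
      rw [hn]
      have : ((((n - 1).toNat : ℤ) + 1 : ℤ) : ℝ) = (n : ℝ) := by
        rw [Int.toNat_of_nonneg (by omega : (0 : ℤ) ≤ n - 1)]
        push_cast
        ring
      simp only [Fin.val_mk]
      push_cast at this ⊢
      linarith
    · rintro ⟨i, hp, -⟩
      exact hp
end

section
/- Let A ⊆ B ⊆ ℝ². For any bounded doubly increasing function u : A → ℝ, there exists a doubly increasing function w : B → ℝ whose restriction to A is u and such that the closures of the images u(A) and w(B) coincide. -/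
/-!
Extend `u` from below: at `p`, take the supremum of `u` over the points of `A` below `p`,
floored by `inf u(A)` so that the supremum is never taken over an empty set. This is monotone,
agrees with `u` on `A` by monotonicity of `u`, and each value is a supremum of a bounded
nonempty subset of `closure (u '' A)`, hence lies in that closed set.
-/

open Set

section MonotoneExtension

variable {α β : Type*} [Preorder α] [ConditionallyCompleteLinearOrder β]

noncomputable def monotoneExtension (A : Set α) (u : α → β) (p : α) : β :=
  sSup (insert (sInf (u '' A)) (u '' (A ∩ Iic p)))

theorem monotoneExtension_eq_of_mem {A : Set α} {u : α → β} (hu : MonotoneOn u A)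
    (hbdd : BddBelow (u '' A)) {p : α} (hp : p ∈ A) : monotoneExtension A u p = u p := by
  refine IsGreatest.csSup_eq ⟨mem_insert_of_mem _ ⟨p, ⟨hp, le_rfl⟩, rfl⟩, ?_⟩
  rintro _ (rfl | ⟨q, ⟨hq, hqp⟩, rfl⟩)
  · exact csInf_le hbdd (mem_image_of_mem u hp)
  · exact hu hq hp hqp

theorem bddAbove_insert_sInf_image (A : Set α) {u : α → β} (hbdd : BddAbove (u '' A)) (p : α) :
    BddAbove (insert (sInf (u '' A)) (u '' (A ∩ Iic p))) :=
  (hbdd.mono (image_mono inter_subset_left)).insert _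

theorem monotone_monotoneExtension (A : Set α) {u : α → β} (hbdd : BddAbove (u '' A)) :
    Monotone (monotoneExtension A u) := fun _ q hpq =>
  csSup_le_csSup (bddAbove_insert_sInf_image A hbdd q) (insert_nonempty _ _) <|
    insert_subset_insert <| image_mono <| inter_subset_inter_right A <| Iic_subset_Iic.2 hpq

variable [TopologicalSpace β] [OrderTopology β]

theorem monotoneExtension_mem_closure {A : Set α} (hA : A.Nonempty) {u : α → β}
    (hbddA : BddAbove (u '' A)) (hbddB : BddBelow (u '' A)) (p : α) :
    monotoneExtension A u p ∈ closure (u '' A) := by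
  have hsub : insert (sInf (u '' A)) (u '' (A ∩ Iic p)) ⊆ closure (u '' A) :=
    insert_subset (csInf_mem_closure (hA.image u) hbddB)
      ((image_mono inter_subset_left).trans subset_closure)
  exact closure_minimal hsub isClosed_closure <|
    csSup_mem_closure (insert_nonempty _ _) (bddAbove_insert_sInf_image A hbddA p)

theorem closure_image_monotoneExtension {A B : Set α} (hAB : A ⊆ B) (hA : A.Nonempty)
    {u : α → β} (hu : MonotoneOn u A) (hbddA : BddAbove (u '' A)) (hbddB : BddBelow (u '' A)) :
    closure (monotoneExtension A u '' B) = closure (u '' A) := by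
  apply (closure_minimal _ isClosed_closure).antisymm
  · refine closure_mono ?_
    rintro _ ⟨p, hp, rfl⟩
    exact ⟨p, hAB hp, monotoneExtension_eq_of_mem hu hbddB hp⟩
  · rintro _ ⟨p, -, rfl⟩
    exact monotoneExtension_mem_closure hA hbddA hbddB p

end MonotoneExtension

/-- A bounded doubly increasing function on `A` extends to a doubly increasing
function on any superset `B`, with the same closure of the image. -/
theorem stmt4 (A B : Set (ℝ × ℝ)) (hAB : A ⊆ B) (hA : A.Nonempty) (u : ℝ × ℝ → ℝ)
    (hmono : ∀ p ∈ A, ∀ q ∈ A, p.1 ≤ q.1 → p.2 ≤ q.2 → u p ≤ u q)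
    (hbddA : BddAbove (u '' A)) (hbddB : BddBelow (u '' A)) :
    ∃ w : ℝ × ℝ → ℝ, (∀ p ∈ A, w p = u p) ∧
      (∀ p ∈ B, ∀ q ∈ B, p.1 ≤ q.1 → p.2 ≤ q.2 → w p ≤ w q) ∧
      closure (u '' A) = closure (w '' B) := by
  have hu : MonotoneOn u A := fun p hp q hq hpq => hmono p hp q hq hpq.1 hpq.2
  refine ⟨monotoneExtension A u, fun p hp => monotoneExtension_eq_of_mem hu hbddB hp,
    fun p _ q _ h₁ h₂ => monotone_monotoneExtension A hbddA ⟨h₁, h₂⟩,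
    (closure_image_monotoneExtension hAB hA hu hbddA hbddB).symm⟩
end

section
/- Let Ω be an open subset of ℝ². Then for any h ∈ ℝ and r ≥ 0, the set of doubly increasing functions u : Ω → ℝ with values in [h, h+r] is a compact subset of L¹(Ω) (assuming Ω has finite measure so that these functions lie in L¹). -/
/-!
Closedness: an `L¹`-limit of such classes is, along a subsequence, an a.e. pointwise limit, hence
monotone with values in `[a, b]` on a set of full measure; a monotone map from any subset of a
preorder into `[a, b]` extends monotonically to the whole space (take suprema over lower sets).

Total boundedness: by inner regularity the finite measure lives, up to `ε`, on a square. Cut the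
square into `n²` cells of side `δ` and sample a monotone `v` at the lower corners. On a cell, `v`
lies between its values at the lower and the upper corner, so the `L¹` error is at most
`δ² ∑ₖ (v (corner (k + 1)) - v (corner k))`, and this sum telescopes along rows and columns to at
most `2n(b - a)`, giving an error `O(1/n)`. The step functions with coefficients in `[a, b]` form a
compact set, being the continuous image of a cube.
-/

open Set MeasureTheory Filter Topology Finset

theorem MonotoneOn.exists_monotone_extension_Icc {α : Type*} [Preorder α] {s : Set α}
    {f : α → ℝ} {a b : ℝ} (hab : a ≤ b) (hf : MonotoneOn f s) (hfs : MapsTo f s (Icc a b)) :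
    ∃ g : α → ℝ, Monotone g ∧ (∀ x, g x ∈ Icc a b) ∧ EqOn f g s := by
  -- `a` is inserted so that the supremum is taken over a nonempty set below every `x`.
  set S : α → Set ℝ := fun x => insert a (f '' (s ∩ Iic x))
  have hS : ∀ x, S x ⊆ Icc a b := fun x => insert_subset ⟨le_rfl, hab⟩ <|
    image_subset_iff.2 fun y hy => hfs hy.1
  have hbdd : ∀ x, BddAbove (S x) := fun x => bddAbove_Icc.mono (hS x)
  refine ⟨fun x => sSup (S x), fun x y hxy => ?_, fun x => ?_, fun x hx => ?_⟩
  · exact csSup_le_csSup (hbdd y) (insert_nonempty _ _) <| insert_subset_insert <|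
      image_mono <| inter_subset_inter_right _ <| Iic_subset_Iic.2 hxy
  · exact ⟨le_csSup (hbdd x) (mem_insert _ _),
      csSup_le (insert_nonempty _ _) fun y hy => (hS x hy).2⟩
  · refine le_antisymm (le_csSup (hbdd x) (mem_insert_of_mem _ ⟨x, ⟨hx, le_rfl⟩, rfl⟩)) ?_
    refine csSup_le (insert_nonempty _ _) ?_
    rintro _ (rfl | ⟨y, ⟨hy, hyx⟩, rfl⟩)
    exacts [(hfs hx).1, hf hy hx hyx]

def monotoneIccLp {α : Type*} [MeasurableSpace α] [Preorder α] (p : ENNReal) (μ : Measure α)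
    (a b : ℝ) : Set (Lp ℝ p μ) :=
  {f | ∃ g : α → ℝ, Monotone g ∧ (∀ x, g x ∈ Icc a b) ∧ f =ᵐ[μ] g}

section MonotoneIccLp

variable {α : Type*} [MeasurableSpace α] [Preorder α] {p : ENNReal} {a b : ℝ}

theorem isClosed_monotoneIccLp [Fact (1 ≤ p)] (μ : Measure α) (hab : a ≤ b) :
    IsClosed (monotoneIccLp p μ a b) := by
  refine IsSeqClosed.isClosed fun F f hF hFf => ?_
  choose g hg_mono hg_Icc hFg using hF
  obtain ⟨ns, -, hae⟩ := (tendstoInMeasure_of_tendsto_Lp hFf).exists_seq_tendsto_ae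
  set E := {x | Tendsto (fun i => g (ns i) x) atTop (𝓝 (f x))}
  have hE : ∀ᵐ x ∂μ, x ∈ E := by
    filter_upwards [ae_all_iff.2 fun i => hFg (ns i), hae] with x hFgx hx
    exact hx.congr fun i => hFgx i
  have hf_mono : MonotoneOn f E := fun x hx y hy hxy =>
    le_of_tendsto_of_tendsto' hx hy fun i => hg_mono (ns i) hxy
  have hf_Icc : MapsTo f E (Icc a b) := fun x hx =>
    isClosed_Icc.mem_of_tendsto hx (Eventually.of_forall fun i => hg_Icc (ns i) x)
  obtain ⟨G, hG_mono, hG_Icc, hfG⟩ := hf_mono.exists_monotone_extension_Icc hab hf_Icc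
  exact ⟨G, hG_mono, hG_Icc, hE.mono fun x hx => hfG hx⟩

theorem setOf_exists_monotoneOn_eq_monotoneIccLp {μ : Measure α} {s : Set α}
    (hs : MeasurableSet s) (hab : a ≤ b) :
    {f : Lp ℝ p (μ.restrict s) |
      ∃ u : α → ℝ, MonotoneOn u s ∧ MapsTo u s (Icc a b) ∧ f =ᵐ[μ.restrict s] u} =
      monotoneIccLp p (μ.restrict s) a b := by
  ext f
  constructor
  · rintro ⟨u, hu_mono, hu_Icc, hfu⟩
    obtain ⟨g, hg_mono, hg_Icc, hug⟩ := hu_mono.exists_monotone_extension_Icc hab hu_Icc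
    refine ⟨g, hg_mono, hg_Icc, ?_⟩
    filter_upwards [hfu, ae_restrict_mem hs] with x hfux hx
    rw [hfux, hug hx]
  · rintro ⟨g, hg_mono, hg_Icc, hfg⟩
    exact ⟨g, hg_mono.monotoneOn s, fun x _ => hg_Icc x, hfg⟩

end MonotoneIccLp

theorem sum_range_prod_sub_le {g : ℕ × ℕ → ℝ} {a b : ℝ} (hg : ∀ k, g k ∈ Set.Icc a b) (n : ℕ) :
    ∑ k ∈ range n ×ˢ range n, (g (k + 1) - g k) ≤ 2 * n * (b - a) := by
  have hsplit : ∀ k : ℕ × ℕ, g (k + 1) - g k =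
      (g (k.1 + 1, k.2 + 1) - g (k.1, k.2 + 1)) + (g (k.1, k.2 + 1) - g k) := fun k => by
    rw [show k + 1 = (k.1 + 1, k.2 + 1) from rfl]; ring
  have hrow : ∀ j, ∑ i ∈ range n, (g (i + 1, j) - g (i, j)) ≤ b - a := fun j => by
    rw [sum_range_sub (fun i => g (i, j))]
    linarith [(hg (n, j)).2, (hg (0, j)).1]
  have hcol : ∀ i, ∑ j ∈ range n, (g (i, j + 1) - g (i, j)) ≤ b - a := fun i => by
    rw [sum_range_sub (fun j => g (i, j))]
    linarith [(hg (i, n)).2, (hg (i, 0)).1]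
  calc ∑ k ∈ range n ×ˢ range n, (g (k + 1) - g k)
      = ∑ j ∈ range n, ∑ i ∈ range n, (g (i + 1, j + 1) - g (i, j + 1)) +
          ∑ i ∈ range n, ∑ j ∈ range n, (g (i, j + 1) - g (i, j)) := by
        rw [sum_congr rfl fun k _ => hsplit k, sum_add_distrib, sum_product, sum_product,
          sum_comm]
    _ ≤ ∑ _j ∈ range n, (b - a) + ∑ _i ∈ range n, (b - a) :=
        add_le_add (sum_le_sum fun j _ => hrow (j + 1)) (sum_le_sum fun i _ => hcol i)
    _ = 2 * n * (b - a) := by simp only [sum_const, card_range, nsmul_eq_mul]; ring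

def gridCell (t : ℕ → ℝ) (k : ℕ × ℕ) : Set (ℝ × ℝ) :=
  Ico (t k.1) (t (k.1 + 1)) ×ˢ Ico (t k.2) (t (k.2 + 1))

def gridCorner (t : ℕ → ℝ) (k : ℕ × ℕ) : ℝ × ℝ := (t k.1, t k.2)

section Grid

variable {t : ℕ → ℝ}

theorem measurableSet_gridCell (t : ℕ → ℝ) (k : ℕ × ℕ) : MeasurableSet (gridCell t k) :=
  measurableSet_Ico.prod measurableSet_Ico

-- `k + 1` is the diagonal successor `(k.1 + 1, k.2 + 1)`.
theorem gridCorner_le_of_mem_gridCell {k : ℕ × ℕ} {x : ℝ × ℝ} (hx : x ∈ gridCell t k) :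
    gridCorner t k ≤ x ∧ x ≤ gridCorner t (k + 1) :=
  ⟨⟨hx.1.1, hx.2.1⟩, ⟨hx.1.2.le, hx.2.2.le⟩⟩

theorem pairwise_disjoint_gridCell (ht : Monotone t) :
    Pairwise (Function.onFun Disjoint (gridCell t)) := by
  have h1 := ht.pairwise_disjoint_on_Ico_succ
  simp only [Order.succ_eq_add_one] at h1
  intro k l hkl
  rcases Prod.ext_iff.not.1 hkl |> not_and_or.1 with h | h
  · exact Set.disjoint_prod.2 (Or.inl (h1 h))
  · exact Set.disjoint_prod.2 (Or.inr (h1 h))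

theorem exists_mem_gridCell {n : ℕ} {x : ℝ × ℝ}
    (hx : x ∈ Ico (t 0) (t n) ×ˢ Ico (t 0) (t n)) :
    ∃ k ∈ range n ×ˢ range n, x ∈ gridCell t k := by
  obtain ⟨i, hi, hxi⟩ := mem_iUnion₂.1 (Ico_subset_biUnion_Ico n t hx.1)
  obtain ⟨j, hj, hxj⟩ := mem_iUnion₂.1 (Ico_subset_biUnion_Ico n t hx.2)
  exact ⟨(i, j), mem_product.2 ⟨hi, hj⟩, hxi, hxj⟩

theorem volume_gridCell (t : ℕ → ℝ) (k : ℕ × ℕ) :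
    volume (gridCell t k) =
      ENNReal.ofReal (t (k.1 + 1) - t k.1) * ENNReal.ofReal (t (k.2 + 1) - t k.2) := by
  rw [gridCell, Measure.volume_eq_prod, Measure.prod_prod, Real.volume_Ico, Real.volume_Ico]

noncomputable def gridStepFun (t : ℕ → ℝ) (n : ℕ) (q : ℕ × ℕ → ℝ) (x : ℝ × ℝ) : ℝ :=
  ∑ k ∈ range n ×ˢ range n, (gridCell t k).indicator (fun _ => q k) x

theorem gridStepFun_of_mem (ht : Monotone t) {n : ℕ} (q : ℕ × ℕ → ℝ) {k : ℕ × ℕ}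
    (hk : k ∈ range n ×ˢ range n) {x : ℝ × ℝ} (hx : x ∈ gridCell t k) :
    gridStepFun t n q x = q k := by
  rw [gridStepFun, sum_eq_single_of_mem k hk fun l _ hlk =>
    indicator_of_notMem ((pairwise_disjoint_gridCell ht hlk).notMem_of_mem_right hx) _]
  exact indicator_of_mem hx _

theorem gridStepFun_of_forall_notMem {n : ℕ} (q : ℕ × ℕ → ℝ) {x : ℝ × ℝ}
    (hx : ∀ k ∈ range n ×ˢ range n, x ∉ gridCell t k) : gridStepFun t n q x = 0 :=
  sum_eq_zero fun k hk => indicator_of_notMem (hx k hk) _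

theorem abs_sub_gridStepFun_le (ht : Monotone t) {v : ℝ × ℝ → ℝ} (hv : Monotone v) {a b : ℝ}
    (hv_Icc : ∀ x, v x ∈ Icc a b) (n : ℕ) (x : ℝ × ℝ) :
    |v x - gridStepFun t n (v ∘ gridCorner t) x| ≤
      gridStepFun t n (fun k => v (gridCorner t (k + 1)) - v (gridCorner t k)) x +
        (Ico (t 0) (t n) ×ˢ Ico (t 0) (t n))ᶜ.indicator (fun _ => max |a| |b|) x := by
  by_cases hx : ∃ k ∈ range n ×ˢ range n, x ∈ gridCell t k
  · obtain ⟨k, hk, hxk⟩ := hx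
    obtain ⟨hkx, hxk1⟩ := gridCorner_le_of_mem_gridCell hxk
    rw [gridStepFun_of_mem ht _ hk hxk, gridStepFun_of_mem ht _ hk hxk, Function.comp_apply,
      abs_of_nonneg (sub_nonneg.2 (hv hkx))]
    have htail_nonneg := indicator_nonneg (fun _ _ => (abs_nonneg a).trans (le_max_left _ _)) x
      (s := (Ico (t 0) (t n) ×ˢ Ico (t 0) (t n))ᶜ) (f := fun _ => max |a| |b|)
    linarith [hv hxk1]
  · push Not at hx
    have hx_box : x ∈ (Ico (t 0) (t n) ×ˢ Ico (t 0) (t n))ᶜ := fun h => by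
      obtain ⟨k, hk, hxk⟩ := exists_mem_gridCell h
      exact hx k hk hxk
    rw [gridStepFun_of_forall_notMem _ hx, gridStepFun_of_forall_notMem _ hx,
      indicator_of_mem hx_box, sub_zero, zero_add]
    exact abs_le_max_abs_abs (hv_Icc x).1 (hv_Icc x).2

variable (μ : Measure (ℝ × ℝ)) [IsFiniteMeasure μ]

theorem integrable_gridStepFun (t : ℕ → ℝ) (n : ℕ) (q : ℕ × ℕ → ℝ) :
    Integrable (gridStepFun t n q) μ := by
  unfold gridStepFun
  exact integrable_finsetSum _ fun k _ =>
    (integrable_const _).indicator (measurableSet_gridCell t k)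

theorem integral_gridStepFun (t : ℕ → ℝ) (n : ℕ) (q : ℕ × ℕ → ℝ) :
    ∫ x, gridStepFun t n q x ∂μ = ∑ k ∈ range n ×ˢ range n, μ.real (gridCell t k) * q k := by
  unfold gridStepFun
  rw [integral_finsetSum _ fun k _ => (integrable_const _).indicator (measurableSet_gridCell t k)]
  exact sum_congr rfl fun k _ => by
    rw [integral_indicator_const _ (measurableSet_gridCell t k), smul_eq_mul]

noncomputable def gridStep (t : ℕ → ℝ) (n : ℕ) (q : ℕ × ℕ → ℝ) : Lp ℝ 1 μ :=
  ∑ k ∈ range n ×ˢ range n,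
    q k • indicatorConstLp 1 (measurableSet_gridCell t k) (measure_ne_top μ _) (1 : ℝ)

theorem coeFn_gridStep (t : ℕ → ℝ) (n : ℕ) (q : ℕ × ℕ → ℝ) :
    gridStep μ t n q =ᵐ[μ] gridStepFun t n q := by
  have hfun : gridStepFun t n q =
      ∑ k ∈ range n ×ˢ range n, (gridCell t k).indicator fun _ => q k := by
    ext x; simp only [gridStepFun, Finset.sum_apply]
  rw [hfun]
  refine (Lp.coeFn_finsetSum _ _).trans (eventuallyEq_sum fun k _ => ?_)
  filter_upwards [Lp.coeFn_smul (q k) (indicatorConstLp 1 (measurableSet_gridCell t k)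
    (measure_ne_top μ _) (1 : ℝ)), indicatorConstLp_coeFn (p := 1)
    (hs := measurableSet_gridCell t k) (hμs := measure_ne_top μ _) (c := (1 : ℝ))]
    with x hsmul hind
  rw [hsmul, Pi.smul_apply, hind, ← indicator_const_smul_apply, smul_eq_mul, mul_one]

theorem continuous_gridStep (t : ℕ → ℝ) (n : ℕ) : Continuous (gridStep μ t n) :=
  continuous_finsetSum _ fun k _ => (continuous_apply k).smul continuous_const

theorem dist_gridStep_le (ht : Monotone t) {c : ℝ} (hc : ∀ k, μ.real (gridCell t k) ≤ c)
    {v : ℝ × ℝ → ℝ} (hv : Monotone v) {a b : ℝ} (hv_Icc : ∀ x, v x ∈ Icc a b)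
    {f : Lp ℝ 1 μ} (hfv : f =ᵐ[μ] v) (n : ℕ) :
    dist f (gridStep μ t n (v ∘ gridCorner t)) ≤
      2 * n * (b - a) * c + max |a| |b| * μ.real (Ico (t 0) (t n) ×ˢ Ico (t 0) (t n))ᶜ := by
  set D : ℕ × ℕ → ℝ := fun k => v (gridCorner t (k + 1)) - v (gridCorner t k)
  set box := Ico (t 0) (t n) ×ˢ Ico (t 0) (t n)
  have hbox : MeasurableSet boxᶜ := (measurableSet_Ico.prod measurableSet_Ico).compl
  have hD : ∀ k, 0 ≤ D k := fun k =>
    sub_nonneg.2 (hv ⟨ht (Nat.le_succ _), ht (Nat.le_succ _)⟩)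
  have hc0 : 0 ≤ c := measureReal_nonneg.trans (hc 0)
  have htail_int : Integrable (boxᶜ.indicator fun _ => max |a| |b|) μ :=
    (integrable_const _).indicator hbox
  calc dist f (gridStep μ t n (v ∘ gridCorner t))
      = ∫ x, ‖(f - gridStep μ t n (v ∘ gridCorner t)) x‖ ∂μ := by
        rw [dist_eq_norm, L1.norm_eq_integral_norm]
    _ ≤ ∫ x, (gridStepFun t n D x + boxᶜ.indicator (fun _ => max |a| |b|) x) ∂μ := by
        refine integral_mono_ae (L1.integrable_coeFn _).norm
          ((integrable_gridStepFun μ t n D).add htail_int) ?_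
        filter_upwards [Lp.coeFn_sub f (gridStep μ t n (v ∘ gridCorner t)), hfv,
          coeFn_gridStep μ t n (v ∘ gridCorner t)] with x hsub hfx hstep
        rw [hsub, Pi.sub_apply, hfx, hstep, Real.norm_eq_abs]
        exact abs_sub_gridStepFun_le ht hv hv_Icc n x
    _ = ∑ k ∈ range n ×ˢ range n, μ.real (gridCell t k) * D k + μ.real boxᶜ * max |a| |b| := by
        rw [integral_add (integrable_gridStepFun μ t n D) htail_int, integral_gridStepFun,
          integral_indicator_const _ hbox, smul_eq_mul]
    _ ≤ c * ∑ k ∈ range n ×ˢ range n, D k + μ.real boxᶜ * max |a| |b| := by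
        rw [mul_sum]
        gcongr with k
        · exact hD k
        · exact hc k
    _ ≤ 2 * n * (b - a) * c + max |a| |b| * μ.real boxᶜ := by
        have := sum_range_prod_sub_le (fun k => hv_Icc (gridCorner t k)) n
        nlinarith

end Grid

theorem totallyBounded_of_forall_exists_dist_lt {X : Type*} [PseudoMetricSpace X] {s : Set X}
    (h : ∀ ε > 0, ∃ t : Set X, TotallyBounded t ∧ ∀ x ∈ s, ∃ y ∈ t, dist x y < ε) :
    TotallyBounded s := by
  refine Metric.totallyBounded_iff.2 fun ε hε => ?_
  obtain ⟨t, ht, hst⟩ := h (ε / 2) (half_pos hε)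
  obtain ⟨F, hF, htF⟩ := Metric.totallyBounded_iff.1 ht (ε / 2) (half_pos hε)
  refine ⟨F, hF, fun x hx => ?_⟩
  obtain ⟨y, hy, hxy⟩ := hst x hx
  obtain ⟨z, hz, hyz⟩ := mem_iUnion₂.1 (htF hy)
  rw [Metric.mem_ball] at hyz
  exact mem_iUnion₂.2 ⟨z, hz, Metric.mem_ball.2 (by linarith [dist_triangle x y z])⟩

theorem exists_measureReal_compl_square_lt (μ : Measure (ℝ × ℝ)) [IsFiniteMeasure μ] {η : ℝ}
    (hη : 0 < η) : ∃ R : ℝ, 0 < R ∧ μ.real (Set.Ico (-R) R ×ˢ Set.Ico (-R) R)ᶜ < η := by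
  obtain ⟨K, -, hK, hKμ⟩ := MeasurableSet.univ.exists_isCompact_sdiff_lt (μ := μ)
    (measure_ne_top μ univ) (ENNReal.ofReal_pos.2 hη).ne'
  obtain ⟨R, hR⟩ := (Metric.isBounded_iff_subset_closedBall 0).1 hK.isBounded
  refine ⟨|R| + 1, by positivity, ?_⟩
  have hK_square : K ⊆ Set.Ico (-(|R| + 1)) (|R| + 1) ×ˢ Set.Ico (-(|R| + 1)) (|R| + 1) :=
      fun x hx => by
    have hxR := mem_closedBall_zero_iff.1 (hR hx)
    have h1 := (norm_fst_le x).trans hxR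
    have h2 := (norm_snd_le x).trans hxR
    rw [Real.norm_eq_abs, abs_le] at h1 h2
    have := le_abs_self R
    exact ⟨⟨by linarith, by linarith⟩, by linarith, by linarith⟩
  rw [← Set.compl_eq_univ_sdiff] at hKμ
  exact (measureReal_mono (compl_subset_compl.2 hK_square)).trans_lt
    (ENNReal.toReal_lt_of_lt_ofReal hKμ)

theorem totallyBounded_monotoneIccLp {Ω : Set (ℝ × ℝ)} (hΩ : volume Ω ≠ ⊤) (a b : ℝ) :
    TotallyBounded (monotoneIccLp 1 (volume.restrict Ω) a b) := by
  set μ := volume.restrict Ω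
  have : IsFiniteMeasure μ := isFiniteMeasure_restrict.2 hΩ
  set C := max |a| |b|
  refine totallyBounded_of_forall_exists_dist_lt fun ε hε => ?_
  obtain ⟨R, hR, hRμ⟩ :=
    exists_measureReal_compl_square_lt μ (by positivity : 0 < ε / 2 / (C + 1))
  obtain ⟨m, hm⟩ := exists_nat_gt (16 * (b - a) * R ^ 2 / ε)
  set n := m + 1
  have hn : (0 : ℝ) < n := by positivity
  set δ := 2 * R / n
  set t : ℕ → ℝ := fun i => -R + δ * i
  have hδ : 0 < δ := by positivity
  have ht : Monotone t := fun i j hij => by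
    simp only [t]; gcongr
  have ht_succ : ∀ i, t (i + 1) - t i = δ := fun i => by
    simp only [t]; push_cast; ring
  have hcell : ∀ k, μ.real (gridCell t k) ≤ δ ^ 2 := fun k => by
    have hvol : volume (gridCell t k) = ENNReal.ofReal (δ ^ 2) := by
      rw [volume_gridCell, ht_succ, ht_succ, ← ENNReal.ofReal_mul hδ.le, sq]
    exact ENNReal.toReal_le_of_le_ofReal (sq_nonneg δ) (hvol ▸ Measure.restrict_apply_le _ _)
  have htn : t n = R := by simp only [t, δ]; field_simp; ring
  have ht0 : t 0 = -R := by simp [t]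
  have htail : C * μ.real (Ico (t 0) (t n) ×ˢ Ico (t 0) (t n))ᶜ < ε / 2 := by
    rw [ht0, htn]
    rw [lt_div_iff₀ (by positivity)] at hRμ
    nlinarith [measureReal_nonneg (μ := μ) (s := (Set.Ico (-R) R ×ˢ Set.Ico (-R) R)ᶜ)]
  have hgrid : 2 * n * (b - a) * δ ^ 2 < ε / 2 := by
    have e : 2 * n * (b - a) * δ ^ 2 = 8 * (b - a) * R ^ 2 / n := by
      simp only [δ]; field_simp; ring
    rw [e, div_lt_iff₀ hn]
    rw [div_lt_iff₀ hε] at hm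
    have : (m : ℝ) < n := by simp [n]
    nlinarith
  refine ⟨gridStep μ t n '' univ.pi fun _ => Icc a b,
    ((isCompact_univ_pi fun _ => isCompact_Icc).image (continuous_gridStep μ t n)).totallyBounded,
    ?_⟩
  rintro f ⟨v, hv, hv_Icc, hfv⟩
  exact ⟨_, mem_image_of_mem _ fun k _ => hv_Icc _,
    (dist_gridStep_le μ ht hcell hv hv_Icc hfv n).trans_lt (by linarith)⟩

theorem isCompact_monotoneIccLp {Ω : Set (ℝ × ℝ)} (hΩ : volume Ω ≠ ⊤) {a b : ℝ} (hab : a ≤ b) :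
    IsCompact (monotoneIccLp 1 (volume.restrict Ω) a b) :=
  (totallyBounded_monotoneIccLp hΩ a b).isCompact_of_isClosed (isClosed_monotoneIccLp _ hab)

/-- For an open set `Ω` of finite measure, the set of (equivalence classes in
`L¹(Ω)` of) doubly increasing functions on `Ω` with values in `[h, h+r]` is a
compact subset of `L¹(Ω)`. -/
theorem stmt5 (Ω : Set (ℝ × ℝ)) (hΩ : IsOpen Ω) (hfin : volume Ω < ⊤)
    (h r : ℝ) (hr : 0 ≤ r) :
    IsCompact {f : Lp ℝ 1 (volume.restrict Ω) |
      ∃ u : ℝ × ℝ → ℝ,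
        (∀ p ∈ Ω, ∀ q ∈ Ω, p.1 ≤ q.1 → p.2 ≤ q.2 → u p ≤ u q) ∧
        (∀ p ∈ Ω, u p ∈ Set.Icc h (h + r)) ∧
        (∀ᵐ p ∂(volume.restrict Ω), f p = u p)} := by
  have hhr : h ≤ h + r := le_add_of_nonneg_right hr
  have hset :=
    setOf_exists_monotoneOn_eq_monotoneIccLp (p := 1) (μ := volume) hΩ.measurableSet hhr
  simp only [MonotoneOn, MapsTo, Prod.le_def, and_imp] at hset
  have hcompact := isCompact_monotoneIccLp hfin.ne hhr
  rw [← hset] at hcompact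
  exact hcompact
end

section
/- Let Ω be an open subset of ℝ², let u : Ω → ℝ be doubly increasing (increasing in both variables), and let v : Ω → ℝ be decreasing in x and increasing in y. Let A be the subset of Ω where both u and v are differentiable and u_x v_y − u_y v_x > 0. Then the map φ : A → ℝ², φ(x,y) = (u(x,y), v(x,y)), is injective. -/
/-!
Suppose `a ≠ b` have the same image and let `B = [[a, b]]` be the coordinate box with opposite
corners `a` and `b`. If `(b.1 - a.1) (b.2 - a.2) ≥ 0`, then `a` and `b` are comparable in the
product order, so `u` is squeezed between `u a = u b` on `Ω ∩ B`; if it is `≤ 0`, the same holds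
for `v` after the reflection `(x, y) ↦ (-x, y)`. A function that is constant on `B` near `a`
has zero derivative along both edges of `B` at `a`, i.e.
`(b.1 - a.1) f_x = (b.2 - a.2) f_y = 0`. In the generic case this kills the gradient of `u` or of
`v`; when `B` degenerates to a segment parallel to an axis, both `u` and `v` are constant on it
and share a vanishing partial derivative. Either way the Jacobian at `a` vanishes.
-/

open Set Filter Topology

theorem Convex.fderiv_apply_eq_zero_of_eventually_const {E F : Type*}
    [NormedAddCommGroup E] [NormedSpace ℝ E] [NormedAddCommGroup F] [NormedSpace ℝ F]
    {f : E → F} {S : Set E} {a d : E} (hS : Convex ℝ S) (haS : a ∈ S) (hd : a + d ∈ S)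
    (hf : DifferentiableAt ℝ f a) (hc : ∀ᶠ x in 𝓝[S] a, f x = f a) :
    fderiv ℝ f a d = 0 := by
  have hline : Tendsto (fun t : ℝ => a + t • d) (𝓝[≥] 0) (𝓝[S] a) := by
    refine tendsto_nhdsWithin_iff.2 ⟨?_, ?_⟩
    · exact tendsto_nhdsWithin_of_tendsto_nhds
        ((show Continuous fun t : ℝ => a + t • d by fun_prop).tendsto' 0 a (by simp))
    · filter_upwards [Icc_mem_nhdsGE zero_lt_one] with t ht
      exact hS.add_smul_mem haS hd ht
  have hconst : (fun t : ℝ => f (a + t • d)) =ᶠ[𝓝[≥] 0] fun _ => f a := hline.eventually hc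
  have hderiv : HasDerivAt (fun t : ℝ => f (a + t • d)) (fderiv ℝ f a d) 0 :=
    hf.hasFDerivAt.hasLineDerivAt d
  exact (uniqueDiffWithinAt_Ici 0).eq_deriv _ hderiv.hasDerivWithinAt
    ((hasDerivWithinAt_const _ _ (f a)).congr_of_eventuallyEq hconst (by simp))

theorem mul_fderiv_apply_eq_zero_of_eventually_const_uIcc {f : ℝ × ℝ → ℝ} {a b : ℝ × ℝ}
    (hf : DifferentiableAt ℝ f a) (hc : ∀ᶠ x in 𝓝[uIcc a b] a, f x = f a) :
    (b.1 - a.1) * fderiv ℝ f a (1, 0) = 0 ∧ (b.2 - a.2) * fderiv ℝ f a (0, 1) = 0 := by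
  have hconv : Convex ℝ (uIcc a b) := by
    rw [uIcc_prod_eq]
    exact (convex_uIcc _ _).prod (convex_uIcc _ _)
  have hmem : ∀ x ∈ uIcc a.1 b.1, ∀ y ∈ uIcc a.2 b.2, (x, y) ∈ uIcc a b := fun x hx y hy => by
    rw [uIcc_prod_eq]
    exact ⟨hx, hy⟩
  constructor
  · rw [← smul_eq_mul, ← map_smul]
    refine hconv.fderiv_apply_eq_zero_of_eventually_const left_mem_uIcc ?_ hf hc
    convert hmem _ right_mem_uIcc _ left_mem_uIcc using 1
    ext <;> simp
  · rw [← smul_eq_mul, ← map_smul]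
    refine hconv.fderiv_apply_eq_zero_of_eventually_const left_mem_uIcc ?_ hf hc
    convert hmem _ left_mem_uIcc _ right_mem_uIcc using 1
    ext <;> simp

theorem MonotoneOn.eq_of_mem_uIcc {α β : Type*} [Lattice α] [PartialOrder β] {f : α → β}
    {s : Set α} (hf : MonotoneOn f s) {a b x : α} (ha : a ∈ s) (hb : b ∈ s)
    (hab : a ≤ b ∨ b ≤ a) (heq : f a = f b) (hx : x ∈ s) (hxab : x ∈ uIcc a b) :
    f x = f a := by
  rcases hab with hab | hab
  · rw [uIcc_of_le hab] at hxab
    exact le_antisymm (heq ▸ hf hx hb hxab.2) (hf ha hx hxab.1)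
  · rw [uIcc_of_ge hab] at hxab
    exact le_antisymm (hf hx ha hxab.2) (heq ▸ hf hb hx hxab.1)

theorem Prod.zero_le_mul_sub_iff_le_or_ge {R : Type*} [Ring R] [LinearOrder R]
    [IsStrictOrderedRing R] {a b : R × R} :
    0 ≤ (b.1 - a.1) * (b.2 - a.2) ↔ a ≤ b ∨ b ≤ a := by
  simp only [mul_nonneg_iff, sub_nonneg, sub_nonpos, Prod.le_def]

theorem eq_of_mem_inter_uIcc_of_monotoneOn {Ω : Set (ℝ × ℝ)} {u : ℝ × ℝ → ℝ}
    (hu : MonotoneOn u Ω) {a b : ℝ × ℝ} (ha : a ∈ Ω) (hb : b ∈ Ω) (heq : u a = u b)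
    (hab : 0 ≤ (b.1 - a.1) * (b.2 - a.2)) : ∀ x ∈ Ω ∩ uIcc a b, u x = u a :=
  fun _ hx => hu.eq_of_mem_uIcc ha hb (Prod.zero_le_mul_sub_iff_le_or_ge.1 hab) heq hx.1 hx.2

theorem eq_of_mem_inter_uIcc_of_antitone_fst_monotone_snd {Ω : Set (ℝ × ℝ)} {v : ℝ × ℝ → ℝ}
    (hv : ∀ p ∈ Ω, ∀ q ∈ Ω, q.1 ≤ p.1 → p.2 ≤ q.2 → v p ≤ v q) {a b : ℝ × ℝ}
    (ha : a ∈ Ω) (hb : b ∈ Ω) (heq : v a = v b) (hab : (b.1 - a.1) * (b.2 - a.2) ≤ 0) :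
    ∀ x ∈ Ω ∩ uIcc a b, v x = v a := by
  set ρ : ℝ × ℝ → ℝ × ℝ := fun p => (-p.1, p.2)
  have hρρ : ∀ p, ρ (ρ p) = p := fun p => by simp [ρ]
  have hmono : MonotoneOn (v ∘ ρ) (ρ ⁻¹' Ω) := fun p hp q hq hpq =>
    hv _ hp _ hq (neg_le_neg hpq.1) hpq.2
  have hρab : 0 ≤ ((ρ b).1 - (ρ a).1) * ((ρ b).2 - (ρ a).2) := by
    simp only [ρ]
    linarith
  rintro x ⟨hx, hxab⟩
  have hρx : ρ x ∈ uIcc (ρ a) (ρ b) := by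
    rw [uIcc_prod_eq] at hxab ⊢
    exact ⟨image_neg_uIcc a.1 b.1 ▸ mem_image_of_mem _ hxab.1, hxab.2⟩
  simpa [hρρ] using eq_of_mem_inter_uIcc_of_monotoneOn hmono (a := ρ a) (b := ρ b)
    (by simpa [hρρ]) (by simpa [hρρ]) (by simpa [hρρ]) hρab (ρ x) ⟨by simpa [hρρ], hρx⟩

theorem mul_sub_mul_eq_zero_of_mul_eq_zero {ux uy vx vy d₁ d₂ : ℝ} (hd : d₁ ≠ 0 ∨ d₂ ≠ 0)
    (hu : 0 ≤ d₁ * d₂ → d₁ * ux = 0 ∧ d₂ * uy = 0)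
    (hv : d₁ * d₂ ≤ 0 → d₁ * vx = 0 ∧ d₂ * vy = 0) :
    ux * vy - uy * vx = 0 := by
  rcases lt_trichotomy (d₁ * d₂) 0 with h | h | h
  · obtain ⟨hd₁, hd₂⟩ := mul_ne_zero_iff.1 h.ne
    obtain ⟨hvx, hvy⟩ := hv h.le
    simp [(mul_eq_zero.1 hvx).resolve_left hd₁, (mul_eq_zero.1 hvy).resolve_left hd₂]
  · obtain ⟨hux, huy⟩ := hu h.ge
    obtain ⟨hvx, hvy⟩ := hv h.le
    rcases hd with hd₁ | hd₂
    · simp [(mul_eq_zero.1 hux).resolve_left hd₁, (mul_eq_zero.1 hvx).resolve_left hd₁]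
    · simp [(mul_eq_zero.1 huy).resolve_left hd₂, (mul_eq_zero.1 hvy).resolve_left hd₂]
  · obtain ⟨hd₁, hd₂⟩ := mul_ne_zero_iff.1 h.ne'
    obtain ⟨hux, huy⟩ := hu h.le
    simp [(mul_eq_zero.1 hux).resolve_left hd₁, (mul_eq_zero.1 huy).resolve_left hd₂]

/-- If `u` is doubly increasing and `v` is decreasing in `x` and increasing in `y`
on an open set `Ω`, then `(u, v)` is injective on the set of points where both are
differentiable and the Jacobian determinant `u_x v_y - u_y v_x` is positive. -/
theorem stmt7 (Ω : Set (ℝ × ℝ)) (hΩ : IsOpen Ω) (u v : ℝ × ℝ → ℝ)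
    (hu : ∀ p ∈ Ω, ∀ q ∈ Ω, p.1 ≤ q.1 → p.2 ≤ q.2 → u p ≤ u q)
    (hv : ∀ p ∈ Ω, ∀ q ∈ Ω, q.1 ≤ p.1 → p.2 ≤ q.2 → v p ≤ v q) :
    Set.InjOn (fun p => (u p, v p))
      {p ∈ Ω | DifferentiableAt ℝ u p ∧ DifferentiableAt ℝ v p ∧
        0 < fderiv ℝ u p (1, 0) * fderiv ℝ v p (0, 1)
          - fderiv ℝ u p (0, 1) * fderiv ℝ v p (1, 0)} := by
  rintro a ⟨ha, hua, hva, hJ⟩ b ⟨hb, -, -, -⟩ hab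
  obtain ⟨hueq, hveq⟩ := Prod.mk.inj hab
  by_contra hne
  have hnear : ∀ f : ℝ × ℝ → ℝ, (∀ x ∈ Ω ∩ uIcc a b, f x = f a) →
      ∀ᶠ x in 𝓝[uIcc a b] a, f x = f a := fun f hf =>
    mem_nhdsWithin.2 ⟨Ω, hΩ, ha, fun x hx => hf x ⟨hx.1, hx.2⟩⟩
  refine hJ.ne' (mul_sub_mul_eq_zero_of_mul_eq_zero (d₁ := b.1 - a.1) (d₂ := b.2 - a.2) ?_ ?_ ?_)
  · by_contra! h
    exact hne (Prod.ext (sub_eq_zero.1 h.1).symm (sub_eq_zero.1 h.2).symm)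
  · exact fun h => mul_fderiv_apply_eq_zero_of_eventually_const_uIcc hua <| hnear u <|
      eq_of_mem_inter_uIcc_of_monotoneOn (fun p hp q hq hpq => hu p hp q hq hpq.1 hpq.2)
        ha hb hueq h
  · exact fun h => mul_fderiv_apply_eq_zero_of_eventually_const_uIcc hva <| hnear v <|
      eq_of_mem_inter_uIcc_of_antitone_fst_monotone_snd hv ha hb hveq h
end

section
/- Let Ω be an open subset of ℝ² and let C be a compact subset of Ω. Then there is a constant K > 0 such that for all bounded doubly increasing functions u, w : Ω → ℝ, diam w(C) ≤ diam u(Ω) + K · ∫_Ω |w − u| dμ. -/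
/-!
Choose `ε > 0` such that the closed squares of side `2ε` centred at the points of `C` lie in `Ω`.
For `p, q ∈ C`, monotonicity gives `w q - u (q + (ε, ε)) ≤ |w - u|` on the square `[q, q + (ε, ε)]`
and `u (p - (ε, ε)) - w p ≤ |w - u|` on `[p - (ε, ε), p]`; integrating, each of these gaps is at most
`ε⁻² ∫_Ω |w - u|`. Since `u (q + (ε, ε)) - u (p - (ε, ε)) ≤ diam u(Ω)`, this gives
`w q - w p ≤ diam u(Ω) + 2 ε⁻² ∫_Ω |w - u|`, i.e. `K = 2 / ε²` works.
-/

open Set MeasureTheory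
open scoped ENNReal

section MonotoneOn

variable {α : Type*} [MeasurableSpace α] [TopologicalSpace α] [PartialOrder α]
  [OrderClosedTopology α] [OpensMeasurableSpace α] {μ : Measure α} {s : Set α} {f g : α → ℝ}

lemma ofReal_sub_mul_measure_Icc_le_setLIntegral (hf : MonotoneOn f s) (hg : MonotoneOn g s)
    {a b : α} (hab : Icc a b ⊆ s) :
    ENNReal.ofReal (f a - g b) * μ (Icc a b) ≤ ∫⁻ z in s, ENNReal.ofReal |f z - g z| ∂μ :=
  calc ENNReal.ofReal (f a - g b) * μ (Icc a b)
      = ∫⁻ _ in Icc a b, ENNReal.ofReal (f a - g b) ∂μ := (setLIntegral_const _ _).symm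
    _ ≤ ∫⁻ z in Icc a b, ENNReal.ofReal |f z - g z| ∂μ := by
      refine setLIntegral_mono' measurableSet_Icc fun z hz => ENNReal.ofReal_le_ofReal ?_
      have hza : f a ≤ f z := hf (hab (left_mem_Icc.2 (hz.1.trans hz.2))) (hab hz) hz.1
      have hzb : g z ≤ g b := hg (hab hz) (hab (right_mem_Icc.2 (hz.1.trans hz.2))) hz.2
      linarith [le_abs_self (f z - g z)]
    _ ≤ ∫⁻ z in s, ENNReal.ofReal |f z - g z| ∂μ := lintegral_mono_set hab

lemma ofReal_sub_le_setLIntegral_div (hf : MonotoneOn f s) (hg : MonotoneOn g s) {a b : α}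
    (hab : Icc a b ⊆ s) {c : ℝ≥0∞} (hc₀ : c ≠ 0) (hc : c ≠ ∞) (hcab : c ≤ μ (Icc a b)) :
    ENNReal.ofReal (f a - g b) ≤ (∫⁻ z in s, ENNReal.ofReal |f z - g z| ∂μ) / c :=
  (ENNReal.le_div_iff_mul_le (.inl hc₀) (.inl hc)).2 <|
    (mul_le_mul_right hcab _).trans (ofReal_sub_mul_measure_Icc_le_setLIntegral hf hg hab)

lemma ofReal_sub_le_of_monotoneOn (hf : MonotoneOn f s) (hg : MonotoneOn g s)
    {p' p q q' : α} (hp : Icc p' p ⊆ s) (hq : Icc q q' ⊆ s) {c : ℝ≥0∞} (hc₀ : c ≠ 0)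
    (hc : c ≠ ∞) (hcp : c ≤ μ (Icc p' p)) (hcq : c ≤ μ (Icc q q')) :
    ENNReal.ofReal (g q - g p) ≤
      ENNReal.ofReal (f q' - f p') + 2 / c * ∫⁻ z in s, ENNReal.ofReal |g z - f z| ∂μ := by
  set I := ∫⁻ z in s, ENNReal.ofReal |g z - f z| ∂μ
  have hupper : ENNReal.ofReal (g q - f q') ≤ I / c :=
    ofReal_sub_le_setLIntegral_div hg hf hq hc₀ hc hcq
  have hlower : ENNReal.ofReal (f p' - g p) ≤ I / c := by
    have h := ofReal_sub_le_setLIntegral_div hf hg hp hc₀ hc hcp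
    simp_rw [abs_sub_comm (f _)] at h
    exact h
  calc ENNReal.ofReal (g q - g p)
      = ENNReal.ofReal ((g q - f q') + (f q' - f p') + (f p' - g p)) := by ring_nf
    _ ≤ ENNReal.ofReal (g q - f q') + ENNReal.ofReal (f q' - f p') + ENNReal.ofReal (f p' - g p) :=
      ENNReal.ofReal_add_le.trans (by gcongr; exact ENNReal.ofReal_add_le)
    _ ≤ I / c + ENNReal.ofReal (f q' - f p') + I / c := by gcongr
    _ = ENNReal.ofReal (f q' - f p') + 2 / c * I := by
      simp only [div_eq_mul_inv]; ring

end MonotoneOn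

lemma Prod.closedBall_eq_Icc (p : ℝ × ℝ) (r : ℝ) :
    Metric.closedBall p r = Icc (p - (r, r)) (p + (r, r)) := by
  rw [← closedBall_prod_same p.1 p.2, Real.closedBall_eq_Icc, Real.closedBall_eq_Icc, Icc_prod_Icc]
  rfl

lemma Prod.volume_Icc (a b : ℝ × ℝ) :
    volume (Icc a b) = ENNReal.ofReal (b.1 - a.1) * ENNReal.ofReal (b.2 - a.2) := by
  rw [Icc_prod_eq, Measure.volume_eq_prod, Measure.prod_prod, Real.volume_Icc, Real.volume_Icc]

lemma IsCompact.exists_pos_forall_Icc_sub_add_subset {C Ω : Set (ℝ × ℝ)} (hC : IsCompact C)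
    (hΩ : IsOpen Ω) (hCΩ : C ⊆ Ω) :
    ∃ ε > 0, ∀ p ∈ C, Icc (p - (ε, ε)) (p + (ε, ε)) ⊆ Ω := by
  obtain ⟨ε, hε, hsub⟩ := hC.exists_cthickening_subset_open hΩ hCΩ
  exact ⟨ε, hε, fun p hp => Prod.closedBall_eq_Icc p ε ▸
    (Metric.closedBall_subset_cthickening hp ε).trans hsub⟩

lemma ofReal_diam_image_le_of_sub_le {β : Type*} {f : β → ℝ} {t : Set β} {B : ℝ≥0∞}
    (h : ∀ p ∈ t, ∀ q ∈ t, ENNReal.ofReal (f q - f p) ≤ B) :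
    ENNReal.ofReal (Metric.diam (f '' t)) ≤ B := by
  refine ENNReal.ofReal_toReal_le.trans (Metric.ediam_le ?_)
  rintro _ ⟨p, hp, rfl⟩ _ ⟨q, hq, rfl⟩
  rw [edist_dist, Real.dist_eq, abs_eq_max_neg, ENNReal.ofReal_max, neg_sub]
  exact max_le (h q hq p hp) (h p hp q hq)

/-- For an open `Ω ⊆ ℝ²` and a compact `C ⊆ Ω` there is a constant `K > 0` such that
`diam w(C) ≤ diam u(Ω) + K‖w - u‖_Ω` for all bounded doubly increasing `u, w`. -/
theorem stmt9 (Ω : Set (ℝ × ℝ)) (hΩ : IsOpen Ω) (C : Set (ℝ × ℝ))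
    (hC : IsCompact C) (hCΩ : C ⊆ Ω) :
    ∃ K : ℝ, 0 < K ∧ ∀ u w : ℝ × ℝ → ℝ,
      (∀ p ∈ Ω, ∀ q ∈ Ω, p.1 ≤ q.1 → p.2 ≤ q.2 → u p ≤ u q) →
      (∀ p ∈ Ω, ∀ q ∈ Ω, p.1 ≤ q.1 → p.2 ≤ q.2 → w p ≤ w q) →
      Bornology.IsBounded (u '' Ω) → Bornology.IsBounded (w '' Ω) →
      ENNReal.ofReal (Metric.diam (w '' C)) ≤
        ENNReal.ofReal (Metric.diam (u '' Ω)) +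
          ENNReal.ofReal K * ∫⁻ p in Ω, ENNReal.ofReal |w p - u p| := by
  obtain ⟨ε, hε, hbox⟩ := hC.exists_pos_forall_Icc_sub_add_subset hΩ hCΩ
  refine ⟨2 / ε ^ 2, by positivity, fun u w hu hw hub _ => ?_⟩
  have hu' : MonotoneOn u Ω := fun a ha b hb hab => hu a ha b hb hab.1 hab.2
  have hw' : MonotoneOn w Ω := fun a ha b hb hab => hw a ha b hb hab.1 hab.2
  have hvol (a : ℝ × ℝ) : ENNReal.ofReal (ε ^ 2) = volume (Icc a (a + (ε, ε))) := by
    simp [Prod.volume_Icc, sq, ENNReal.ofReal_mul hε.le]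
  have hd : (0 : ℝ × ℝ) ≤ (ε, ε) := ⟨hε.le, hε.le⟩
  rw [ENNReal.ofReal_div_of_pos (by positivity), ENNReal.ofReal_ofNat]
  refine ofReal_diam_image_le_of_sub_le fun p hp q hq => ?_
  have hp : Icc (p - (ε, ε)) p ⊆ Ω :=
    (Icc_subset_Icc_right (le_add_of_nonneg_right hd)).trans (hbox p hp)
  have hq : Icc q (q + (ε, ε)) ⊆ Ω := (Icc_subset_Icc_left (sub_le_self _ hd)).trans (hbox q hq)
  have hu_sub : u (q + (ε, ε)) - u (p - (ε, ε)) ≤ Metric.diam (u '' Ω) :=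
    (le_abs_self _).trans <| Metric.dist_le_diam_of_mem hub
      (mem_image_of_mem u (hq (right_mem_Icc.2 (le_add_of_nonneg_right hd))))
      (mem_image_of_mem u (hp (left_mem_Icc.2 (sub_le_self _ hd))))
  calc ENNReal.ofReal (w q - w p)
      ≤ ENNReal.ofReal (u (q + (ε, ε)) - u (p - (ε, ε))) +
          2 / ENNReal.ofReal (ε ^ 2) * ∫⁻ z in Ω, ENNReal.ofReal |w z - u z| :=
        ofReal_sub_le_of_monotoneOn hu' hw' hp hq (by positivity) ENNReal.ofReal_ne_top
          (by simpa using (hvol (p - (ε, ε))).le) (hvol q).le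
    _ ≤ _ := by gcongr
end

section
/- Let F₁, F₂, … be random concave functions from ℝ_{≥0} to ℝ converging pointwise in probability to a deterministic function F. Then for every x > 0 at which F is differentiable, both the left derivatives ∂₋Fₙ(x) and the right derivatives ∂₊Fₙ(x) converge to F'(x) in probability. -/
open Set Filter MeasureTheory Topology

/-!
Concavity sandwiches both one-sided derivatives at `x` between secant slopes:
`slope Fₙ x b ≤ ∂₊Fₙ(x) ≤ ∂₋Fₙ(x) ≤ slope Fₙ x a` for `0 ≤ a < x < b`. A secant slope is a
linear combination of two values of `Fₙ`, so it converges in probability to the corresponding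
secant slope of `F`, and those tend to `F'(x)` as `a ↑ x` and `b ↓ x`.
-/

namespace ConcaveOn

variable {S : Set ℝ} {f : ℝ → ℝ} {x y : ℝ}

lemma differentiableWithinAt_Ioi_of_mem_interior (hfc : ConcaveOn ℝ S f)
    (hxs : x ∈ interior S) : DifferentiableWithinAt ℝ f (Ioi x) x := by
  simpa using hfc.neg.differentiableWithinAt_Ioi_of_mem_interior hxs |>.neg

lemma differentiableWithinAt_Iio_of_mem_interior (hfc : ConcaveOn ℝ S f)
    (hxs : x ∈ interior S) : DifferentiableWithinAt ℝ f (Iio x) x := by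
  simpa using hfc.neg.differentiableWithinAt_Iio_of_mem_interior hxs |>.neg

lemma rightDeriv_le_leftDeriv_of_mem_interior (hfc : ConcaveOn ℝ S f) (hxs : x ∈ interior S) :
    derivWithin f (Ioi x) x ≤ derivWithin f (Iio x) x := by
  simpa [derivWithin.neg] using hfc.neg.leftDeriv_le_rightDeriv_of_mem_interior hxs

lemma slope_le_rightDeriv_of_mem_interior (hfc : ConcaveOn ℝ S f)
    (hxs : x ∈ interior S) (hys : y ∈ S) (hxy : x < y) :
    slope f x y ≤ derivWithin f (Ioi x) x :=
  hfc.slope_le_rightDeriv (interior_subset hxs) hys hxy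
    (hfc.differentiableWithinAt_Ioi_of_mem_interior hxs)

lemma leftDeriv_le_slope_of_mem_interior (hfc : ConcaveOn ℝ S f)
    (hxs : x ∈ S) (hys : y ∈ interior S) (hxy : x < y) :
    derivWithin f (Iio y) y ≤ slope f x y :=
  hfc.leftDeriv_le_slope hxs (interior_subset hys) hxy
    (hfc.differentiableWithinAt_Iio_of_mem_interior hys)

end ConcaveOn

namespace MeasureTheory

variable {α ι κ 𝕜 E : Type*} [MeasurableSpace α] {μ : Measure α} {l : Filter ι}

lemma tendsto_measure_zero_of_subset_union {s t u : ι → Set α} (hs : ∀ i, s i ⊆ t i ∪ u i)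
    (ht : Tendsto (fun i => μ (t i)) l (𝓝 0)) (hu : Tendsto (fun i => μ (u i)) l (𝓝 0)) :
    Tendsto (fun i => μ (s i)) l (𝓝 0) := by
  refine tendsto_of_tendsto_of_tendsto_of_le_of_le tendsto_const_nhds
    (by simpa using ht.add hu) (fun _ => zero_le) fun i => ?_
  exact (measure_mono (hs i)).trans (measure_union_le _ _)

section Normed

variable [SeminormedAddCommGroup E] {f f' : ι → α → E} {g g' : α → E}

theorem TendstoInMeasure.sub (hf : TendstoInMeasure μ f l g) (hf' : TendstoInMeasure μ f' l g') :
    TendstoInMeasure μ (fun i ω => f i ω - f' i ω) l (fun ω => g ω - g' ω) := by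
  rw [tendstoInMeasure_iff_norm] at *
  intro ε hε
  refine tendsto_measure_zero_of_subset_union (fun i ω hω => ?_) (hf (ε / 2) (half_pos hε))
    (hf' (ε / 2) (half_pos hε))
  by_contra! h
  simp only [mem_union, mem_ofPred_eq, not_or, not_le] at h hω
  have := norm_sub_le (f i ω - g ω) (f' i ω - g' ω)
  rw [sub_sub_sub_comm] at this
  linarith

theorem TendstoInMeasure.const_smul [NormedField 𝕜] [NormedSpace 𝕜 E]
    (hf : TendstoInMeasure μ f l g) (c : 𝕜) :
    TendstoInMeasure μ (fun i ω => c • f i ω) l (fun ω => c • g ω) := by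
  rw [tendstoInMeasure_iff_norm] at *
  intro ε hε
  rcases eq_or_ne c 0 with rfl | hc
  · simpa [hε.not_ge] using tendsto_const_nhds
  have hc' : 0 < ‖c‖ := norm_pos_iff.2 hc
  refine (hf (ε / ‖c‖) (div_pos hε hc')).congr fun i => ?_
  congr 1
  ext ω
  simp only [mem_ofPred_eq, ← smul_sub, norm_smul, div_le_iff₀ hc', mul_comm]

end Normed

theorem tendstoInMeasure_slope [NormedField 𝕜] [SeminormedAddCommGroup E] [NormedSpace 𝕜 E]
    {F : ι → α → 𝕜 → E} {G : α → 𝕜 → E} {x y : 𝕜}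
    (hx : TendstoInMeasure μ (fun i ω => F i ω x) l (fun ω => G ω x))
    (hy : TendstoInMeasure μ (fun i ω => F i ω y) l (fun ω => G ω y)) :
    TendstoInMeasure μ (fun i ω => slope (F i ω) x y) l (fun ω => slope (G ω) x y) := by
  simp only [slope_def_module]
  exact (hy.sub hx).const_smul _

theorem tendstoInMeasure_of_squeeze {la lb : Filter κ} [la.NeBot] [lb.NeBot]
    {D : ι → α → ℝ} {U V : κ → ι → α → ℝ} {u v : κ → ℝ} {L : ℝ}
    (hu : Tendsto u la (𝓝 L)) (hv : Tendsto v lb (𝓝 L))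
    (hU : ∀ᶠ a in la, TendstoInMeasure μ (U a) l (fun _ => u a) ∧ ∀ i ω, D i ω ≤ U a i ω)
    (hV : ∀ᶠ b in lb, TendstoInMeasure μ (V b) l (fun _ => v b) ∧ ∀ i ω, V b i ω ≤ D i ω) :
    TendstoInMeasure μ D l (fun _ => L) := by
  rw [tendstoInMeasure_iff_dist]
  intro ε hε
  obtain ⟨a, ⟨hUa, hDU⟩, hua⟩ :=
    (hU.and (hu.eventually (gt_mem_nhds (show L < L + ε / 2 by linarith)))).exists
  obtain ⟨b, ⟨hVb, hVD⟩, hvb⟩ :=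
    (hV.and (hv.eventually (lt_mem_nhds (show L - ε / 2 < L by linarith)))).exists
  rw [tendstoInMeasure_iff_dist] at hUa hVb
  refine tendsto_measure_zero_of_subset_union (fun i ω hω => ?_) (hUa (ε / 2) (half_pos hε))
    (hVb (ε / 2) (half_pos hε))
  have h1 := hDU i ω
  have h2 := hVD i ω
  simp only [mem_union, mem_ofPred_eq, Real.dist_eq, le_abs] at hω ⊢
  rcases hω with h | h
  · left; left; linarith
  · right; right; linarith

theorem tendstoInMeasure_of_squeeze_slope {F : ι → α → ℝ → ℝ} {G : ℝ → ℝ} {s : Set ℝ}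
    {x L : ℝ} {D : ι → α → ℝ} (hs : s ∈ 𝓝 x)
    (hF : ∀ y ∈ s, TendstoInMeasure μ (fun i ω => F i ω y) l (fun _ => G y))
    (hG : HasDerivWithinAt G L s x)
    (hlo : ∀ i ω b, b ∈ s → x < b → slope (F i ω) x b ≤ D i ω)
    (hup : ∀ i ω a, a ∈ s → a < x → D i ω ≤ slope (F i ω) x a) :
    TendstoInMeasure μ D l (fun _ => L) := by
  have hleft : Tendsto (slope G x) (𝓝[<] x) (𝓝 L) :=
    (hasDerivWithinAt_iff_tendsto_slope' self_notMem_Iio).1 <|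
      hG.mono_of_mem_nhdsWithin (mem_nhdsWithin_of_mem_nhds hs)
  have hright : Tendsto (slope G x) (𝓝[>] x) (𝓝 L) :=
    (hasDerivWithinAt_iff_tendsto_slope' self_notMem_Ioi).1 <|
      hG.mono_of_mem_nhdsWithin (mem_nhdsWithin_of_mem_nhds hs)
  have hx : x ∈ s := mem_of_mem_nhds hs
  refine tendstoInMeasure_of_squeeze (U := fun a i ω => slope (F i ω) x a)
    (V := fun b i ω => slope (F i ω) x b) hleft hright ?_ ?_
  · filter_upwards [mem_nhdsWithin_of_mem_nhds hs, self_mem_nhdsWithin] with a has (hax : a < x)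
    exact ⟨tendstoInMeasure_slope (hF x hx) (hF a has), fun i ω => hup i ω a has hax⟩
  · filter_upwards [mem_nhdsWithin_of_mem_nhds hs, self_mem_nhdsWithin] with b hbs (hxb : x < b)
    exact ⟨tendstoInMeasure_slope (hF x hx) (hF b hbs), fun i ω => hlo i ω b hbs hxb⟩

end MeasureTheory

theorem stmt11_general {α : Type*} [MeasurableSpace α] (μ : Measure α)
    (F : ℕ → α → ℝ → ℝ) (Flim : ℝ → ℝ)
    (hconc : ∀ n ω, ConcaveOn ℝ (Set.Ici 0) (F n ω))
    (hprob : ∀ x ∈ Set.Ici (0 : ℝ), ∀ ε > (0 : ℝ),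
      Tendsto (fun n => μ {ω | ε ≤ |F n ω x - Flim x|}) atTop (nhds 0))
    (x : ℝ) (hx : 0 < x) (L : ℝ) (hdiff : HasDerivWithinAt Flim L (Set.Ici 0) x) :
    (∀ ε > (0 : ℝ),
      Tendsto (fun n => μ {ω | ε ≤ |derivWithin (F n ω) (Set.Iio x) x - L|})
        atTop (nhds 0)) ∧
    (∀ ε > (0 : ℝ),
      Tendsto (fun n => μ {ω | ε ≤ |derivWithin (F n ω) (Set.Ioi x) x - L|})
        atTop (nhds 0)) := by
  have hF : ∀ y ∈ Ici (0 : ℝ), TendstoInMeasure μ (fun n ω => F n ω y) atTop (fun _ => Flim y) :=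
    fun y hy => by simpa only [tendstoInMeasure_iff_norm, Real.norm_eq_abs] using hprob y hy
  have hint : x ∈ interior (Ici (0 : ℝ)) := by simpa using hx
  have hlo n ω b (hb : b ∈ Ici 0) (hxb : x < b) :
      slope (F n ω) x b ≤ derivWithin (F n ω) (Ioi x) x :=
    (hconc n ω).slope_le_rightDeriv_of_mem_interior hint hb hxb
  have hup n ω a (ha : a ∈ Ici 0) (hax : a < x) :
      derivWithin (F n ω) (Iio x) x ≤ slope (F n ω) x a :=
    slope_comm (F n ω) a x ▸ (hconc n ω).leftDeriv_le_slope_of_mem_interior ha hint hax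
  have hmid n ω := (hconc n ω).rightDeriv_le_leftDeriv_of_mem_interior hint
  simp only [← Real.norm_eq_abs, ← tendstoInMeasure_iff_norm]
  exact ⟨tendstoInMeasure_of_squeeze_slope (Ici_mem_nhds hx) hF hdiff
      (fun n ω b hb hxb => (hlo n ω b hb hxb).trans (hmid n ω)) hup,
    tendstoInMeasure_of_squeeze_slope (Ici_mem_nhds hx) hF hdiff
      hlo fun n ω a ha hax => (hmid n ω).trans (hup n ω a ha hax)⟩

/-- If random concave functions on `ℝ_{≥0}` converge pointwise in probability to a
deterministic function `F`, then at any `x > 0` where `F` is differentiable (with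
derivative `L`), both the left and the right derivatives of `Fₙ` at `x` converge to
`L` in probability. -/
theorem stmt11 {α : Type*} [MeasurableSpace α] (μ : Measure α)
    [IsProbabilityMeasure μ] (F : ℕ → α → ℝ → ℝ) (Flim : ℝ → ℝ)
    (hconc : ∀ n ω, ConcaveOn ℝ (Set.Ici 0) (F n ω))
    (hprob : ∀ x ∈ Set.Ici (0 : ℝ), ∀ ε > (0 : ℝ),
      Tendsto (fun n => μ {ω | ε ≤ |F n ω x - Flim x|}) atTop (nhds 0))
    (x : ℝ) (hx : 0 < x) (L : ℝ) (hdiff : HasDerivWithinAt Flim L (Set.Ici 0) x) :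
    (∀ ε > (0 : ℝ),
      Tendsto (fun n => μ {ω | ε ≤ |derivWithin (F n ω) (Set.Iio x) x - L|})
        atTop (nhds 0)) ∧
    (∀ ε > (0 : ℝ),
      Tendsto (fun n => μ {ω | ε ≤ |derivWithin (F n ω) (Set.Ioi x) x - L|})
        atTop (nhds 0)) :=
  stmt11_general μ F Flim hconc hprob x hx L hdiff
end

section
/- Let A be a convex subset of a real vector space, B ⊆ ℝ, C ⊆ B. Let ψ : A → B be concave, strictly concave on the line through any two distinct points x ≠ y with ψ(x) = ψ(y). Let φ : B → ℝ be increasing, strictly concave from C (meaning φ((1−t)s+tt') > (1−t)φ(s)+tφ(t') for s ∈ C, t' ∈ B, s ≠ t', t ∈ (0,1)) and strictly increasing from C (meaning φ(s) < φ(t') for s ∈ C, t' ∈ B, s < t'). Then φ ∘ ψ is strictly concave from ψ⁻¹(C): for any x ∈ ψ⁻¹(C), y ∈ A with x ≠ y, and t ∈ (0,1), (φ∘ψ)((1−t)x+ty) > (1−t)(φ∘ψ)(x) + t(φ∘ψ)(y). -/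
open Set

private lemma seg_comb {E : Type*} [AddCommGroup E] [Module ℝ E] (x y : E)
    (c d u e : ℝ) (he : e = (1 - u) * c + u * d) :
    (1 - u) • ((1 - c) • x + c • y) + u • ((1 - d) • x + d • y)
      = (1 - e) • x + e • y := by
  subst he; module

private lemma seg_comb_left {E : Type*} [AddCommGroup E] [Module ℝ E] (x y : E)
    (d u e : ℝ) (he : e = u * d) :
    (1 - u) • x + u • ((1 - d) • x + d • y) = (1 - e) • x + e • y := by
  subst he; module

private lemma seg_comb_right {E : Type*} [AddCommGroup E] [Module ℝ E] (x y : E)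
    (c u e : ℝ) (he : e = (1 - u) * c + u) :
    (1 - u) • ((1 - c) • x + c • y) + u • y = (1 - e) • x + e • y := by
  subst he; module

/-- Composition lemma for strict concavity from a subset: if `ψ : A → B` is concave
and strictly concave on lines through points with equal values, and `φ : B → ℝ` is
increasing, strictly concave from `C` and strictly increasing from `C`, then
`φ ∘ ψ` is strictly concave from `ψ⁻¹(C)`. -/
theorem stmt13 {E : Type*} [AddCommGroup E] [Module ℝ E] (A : Set E) (B C : Set ℝ)
    (hCB : C ⊆ B) (ψ : E → ℝ) (φ : ℝ → ℝ)
    (hψ : ConcaveOn ℝ A ψ) (hmaps : ∀ x ∈ A, ψ x ∈ B)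
    (hψstrict : ∀ x ∈ A, ∀ y ∈ A, x ≠ y → ψ x = ψ y → ∀ t ∈ Set.Ioo (0 : ℝ) 1,
      (1 - t) * ψ x + t * ψ y < ψ ((1 - t) • x + t • y))
    (hφmono : MonotoneOn φ B)
    (hφstrictconc : ∀ s ∈ C, ∀ s' ∈ B, s ≠ s' → ∀ t ∈ Set.Ioo (0 : ℝ) 1,
      (1 - t) * φ s + t * φ s' < φ ((1 - t) * s + t * s'))
    (hφstrictmono : ∀ s ∈ C, ∀ s' ∈ B, s < s' → φ s < φ s') :
    ∀ x ∈ A, ψ x ∈ C → ∀ y ∈ A, x ≠ y → ∀ t ∈ Set.Ioo (0 : ℝ) 1,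
      (1 - t) * φ (ψ x) + t * φ (ψ y) < φ (ψ ((1 - t) • x + t • y)) := by
  intro x hx hxC y hy hxy t ht
  obtain ⟨ht0, ht1⟩ := ht
  set z : E := (1 - t) • x + t • y with hz
  have hzA : z ∈ A := hψ.1 hx hy (by linarith) (by linarith) (by ring)
  set α := ψ x with hα
  set β := ψ y with hβ
  set γ := ψ z with hγ
  have hαB : α ∈ B := hCB hxC
  have hβB : β ∈ B := hmaps y hy
  have hγB : γ ∈ B := hmaps z hzA
  -- concavity of ψ
  have hconc : (1 - t) * α + t * β ≤ γ := by
    have := hψ.2 hx hy (by linarith : (0:ℝ) ≤ 1 - t) (le_of_lt ht0) (by ring)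
    simpa [smul_eq_mul] using this
  by_cases hab : α = β
  · -- equal values: strict concavity of ψ kicks in
    have hstr : (1 - t) * α + t * β < γ :=
      hψstrict x hx y hy hxy hab t ⟨ht0, ht1⟩
    have he : (1 - t) * α + t * β = α := by rw [hab]; ring
    have hαγ : α < γ := by linarith
    have : φ α < φ γ := hφstrictmono α hxC γ hγB hαγ
    rw [← hab]
    linarith
  · rcases lt_or_gt_of_ne hab with hlt | hgt
    · -- α < β
      by_cases hγβ : β ≤ γ
      · have h1 : φ α < φ γ := hφstrictmono α hxC γ hγB (lt_of_lt_of_le hlt hγβ)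
        have h2 : φ β ≤ φ γ := hφmono hβB hγB hγβ
        have e1 : (1 - t) * φ α < (1 - t) * φ γ := by
          apply mul_lt_mul_of_pos_left h1; linarith
        have e2 : t * φ β ≤ t * φ γ := mul_le_mul_of_nonneg_left h2 (le_of_lt ht0)
        have e3 : (1 - t) * φ γ + t * φ γ = φ γ := by ring
        linarith
      · push_neg at hγβ
        set r : ℝ := (γ - α) / (β - α) with hr
        have hβα : (0:ℝ) < β - α := by linarith
        have he : (1 - t) * α + t * β = α + t * (β - α) := by ring
        have hr0 : 0 < r := by
          apply div_pos _ hβα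
          have : 0 < t * (β - α) := mul_pos ht0 hβα
          linarith
        have hr1 : r < 1 := by
          rw [hr, div_lt_one hβα]; linarith
        have hγr : γ = (1 - r) * α + r * β := by
          rw [hr]; field_simp; ring
        have hstr : (1 - r) * φ α + r * φ β < φ γ := by
          rw [hγr]
          exact hφstrictconc α hxC β hβB hab r ⟨hr0, hr1⟩
        have hrt : t ≤ r := by
          rw [hr, le_div_iff₀ hβα]; linarith
        have hφαβ : φ α < φ β := hφstrictmono α hxC β hβB hlt
        have e1 : 0 ≤ (r - t) * (φ β - φ α) :=
          mul_nonneg (by linarith) (by linarith)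
        have e2 : (1 - r) * φ α + r * φ β - ((1 - t) * φ α + t * φ β)
            = (r - t) * (φ β - φ α) := by ring
        linarith
    · -- α > β
      rcases lt_trichotomy γ α with hγα | hγα | hγα
      · -- β < γ < α : γ is a strict convex combination of α and β
        set r : ℝ := (α - γ) / (α - β) with hr
        have hαβ : (0:ℝ) < α - β := by linarith
        have he : (1 - t) * α + t * β = α - t * (α - β) := by ring
        have hβγ : β < γ := by
          have : 0 < (1 - t) * (α - β) := mul_pos (by linarith) hαβ
          nlinarith [this]
        have hr0 : 0 < r := by
          apply div_pos _ hαβ; linarith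
        have hr1 : r < 1 := by
          rw [hr, div_lt_one hαβ]; linarith
        have hγr : γ = (1 - r) * α + r * β := by
          rw [hr]; field_simp; ring
        have hstr : (1 - r) * φ α + r * φ β < φ γ := by
          rw [hγr]
          exact hφstrictconc α hxC β hβB hab r ⟨hr0, hr1⟩
        have hrt : r ≤ t := by
          rw [hr, div_le_iff₀ hαβ]; linarith
        have hφβα : φ β ≤ φ α := hφmono hβB hαB (le_of_lt hgt)
        have e1 : 0 ≤ (t - r) * (φ α - φ β) :=
          mul_nonneg (by linarith) (by linarith)
        have e2 : (1 - r) * φ α + r * φ β - ((1 - t) * φ α + t * φ β)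
            = (t - r) * (φ α - φ β) := by ring
        linarith
      · -- γ = α : use an auxiliary point further along the segment
        set s : ℝ := (t + 1) / 2 with hs
        have hts : t < s := by rw [hs]; linarith
        have hs1 : s < 1 := by rw [hs]; linarith
        have hs0 : 0 < s := by linarith
        set p : E := (1 - s) • x + s • y with hp
        have hpA : p ∈ A := hψ.1 hx hy (by linarith) (by linarith) (by ring)
        set q : ℝ := ψ p with hq
        have hqB : q ∈ B := hmaps p hpA
        -- z lies between x and p
        have hzxp : z = (1 - t / s) • x + (t / s) • p := by
          rw [hp, hz]
          exact (seg_comb_left x y s (t / s) t (by field_simp)).symm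
        have hθ0 : (0:ℝ) ≤ t / s := le_of_lt (div_pos ht0 hs0)
        have hθ1 : t / s < 1 := (div_lt_one hs0).mpr hts
        have hθ0' : (0:ℝ) < t / s := div_pos ht0 hs0
        have hqle : q ≤ α := by
          have hcc := hψ.2 hx hpA (by linarith : (0:ℝ) ≤ 1 - t / s) hθ0 (by ring)
          rw [← hzxp] at hcc
          simp only [smul_eq_mul] at hcc
          rw [← hγ, hγα] at hcc
          by_contra hqgt
          push_neg at hqgt
          have h1 : 0 < (t / s) * (q - α) := mul_pos hθ0' (by linarith)
          have h2 : (1 - t / s) * α + (t / s) * q = α + (t / s) * (q - α) := by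
            ring
          linarith
        -- q ≠ α
        have hqne : q < α := by
          rcases lt_or_eq_of_le hqle with h | h
          · exact h
          · exfalso
            have hzp : z ≠ p := by
              intro hzpeq
              have hd : z - p = (s - t) • (x - y) := by
                rw [hz, hp]; module
              rw [hzpeq, sub_self] at hd
              have hst' : (s - t : ℝ) ≠ 0 := by intro hc; linarith [sub_eq_zero.mp hc]
              have hxy' : x - y = 0 :=
                (smul_eq_zero.mp hd.symm).resolve_left hst'
              exact hxy (sub_eq_zero.mp hxy')
            have hzpψ : ψ z = ψ p := by rw [← hγ, ← hq, hγα, h]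
            have hm := hψstrict z hzA p hpA hzp hzpψ (1/2) ⟨by norm_num, by norm_num⟩
            set m : E := (1 - 1/2 : ℝ) • z + (1/2 : ℝ) • p with hmdef
            have hmA : m ∈ A := hψ.1 hzA hpA (by norm_num) (by norm_num) (by norm_num)
            rw [← hγ, ← hq, hγα, h] at hm
            have hmgt : α < ψ m := by linarith
            -- m is at parameter v := (t+s)/2 on segment [x,y]; z between x and m
            set v : ℝ := (t + s) / 2 with hv
            have hv0 : 0 < v := by rw [hv]; linarith
            have hvt : t < v := by rw [hv]; linarith
            have hmxy : m = (1 - v) • x + v • y := by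
              rw [hmdef, hz, hp]
              exact seg_comb x y t s (1/2) v (by rw [hv]; ring)
            have hzxm : z = (1 - t / v) • x + (t / v) • m := by
              rw [hmxy, hz]
              exact (seg_comb_left x y v (t / v) t (by field_simp)).symm
            have hθv0 : (0:ℝ) < t / v := div_pos ht0 hv0
            have hθv1 : t / v < 1 := (div_lt_one hv0).mpr hvt
            have hcc := hψ.2 hx hmA (by linarith : (0:ℝ) ≤ 1 - t / v)
              (le_of_lt hθv0) (by ring)
            rw [← hzxm] at hcc
            simp only [smul_eq_mul] at hcc
            rw [← hγ, hγα] at hcc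
            have h1 : 0 < (t / v) * (ψ m - α) := mul_pos hθv0 (by linarith)
            have h2 : (1 - t / v) * α + (t / v) * ψ m
                = α + (t / v) * (ψ m - α) := by ring
            linarith
        -- β < q : concavity between z and y
        have hβq : β < q := by
          have h1t : (0:ℝ) < 1 - t := by linarith
          set u : ℝ := (s - t) / (1 - t) with hu
          have hu0 : 0 < u := div_pos (by linarith) h1t
          have hu1 : u < 1 := by rw [hu, div_lt_one h1t]; linarith
          have hpzy : p = (1 - u) • z + u • y := by
            rw [hp, hz]
            refine (seg_comb_right x y t u s ?_).symm
            rw [hu]; field_simp; ring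
          have hcc := hψ.2 hzA hy (by linarith : (0:ℝ) ≤ 1 - u)
            (le_of_lt hu0) (by ring)
          rw [← hpzy] at hcc
          simp only [smul_eq_mul] at hcc
          rw [← hq, ← hγ, hγα] at hcc
          have h1 : 0 < (1 - u) * (α - β) := mul_pos (by linarith) (by linarith)
          have h2 : (1 - u) * α + u * β = β + (1 - u) * (α - β) := by ring
          linarith
        -- q is a strict convex combination of α and β
        set w : ℝ := (α - q) / (α - β) with hw
        have hαβ : (0:ℝ) < α - β := by linarith
        have hw0 : 0 < w := div_pos (by linarith) hαβ
        have hw1 : w < 1 := by rw [hw, div_lt_one hαβ]; linarith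
        have hqw : q = (1 - w) * α + w * β := by
          rw [hw]; field_simp; ring
        have hstr : (1 - w) * φ α + w * φ β < φ q := by
          rw [hqw]
          exact hφstrictconc α hxC β hβB hab w ⟨hw0, hw1⟩
        have hqα : φ q ≤ φ α := hφmono hqB hαB (le_of_lt hqne)
        have hwφ : w * φ β < w * φ α := by linarith
        have hφβα : φ β < φ α := lt_of_mul_lt_mul_left hwφ (le_of_lt hw0)
        have e1 : t * φ β < t * φ α := by
          apply mul_lt_mul_of_pos_left hφβα ht0
        have e2 : (1 - t) * φ α + t * φ α = φ α := by ring
        rw [hγα]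
        linarith
      · -- α < γ
        have h1 : φ α < φ γ := hφstrictmono α hxC γ hγB hγα
        have h2 : φ β ≤ φ γ := hφmono hβB hγB (by linarith)
        have e1 : (1 - t) * φ α < (1 - t) * φ γ := by
          apply mul_lt_mul_of_pos_left h1; linarith
        have e2 : t * φ β ≤ t * φ γ := mul_le_mul_of_nonneg_left h2 (le_of_lt ht0)
        have e3 : (1 - t) * φ γ + t * φ γ = φ γ := by ring
        linarith
end

section
/- Let Ω be the open rhombus {(x,y) : a|x| + b|y| < 1} for a, b > 0, let c > 0, and let u : Ω → [−c, c] be a doubly increasing function such that u is differentiable almost everywhere with u_x = c·a and u_y = c·b almost everywhere on Ω. Then u(x,y) = c(ax + by) for every (x,y) ∈ Ω. -/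
/-!
In the coordinates `s = a x - b y`, `t = a x + b y` the rhombus becomes the square `(-1, 1)²`,
and on almost every line `s = const` the function `t ↦ u` is monotone with derivative `c`
almost everywhere. The derivative of a monotone function integrates to at most its increment,
so `u` rises at rate at least `c` along such a line; as it stays in `[-c, c]` over a
`t`-interval of length `2`, it must equal `c t` there. Hence `u = c (a x + b y)` almost
everywhere, and a doubly increasing function agreeing almost everywhere with a continuous
function on an open set agrees with it everywhere: points of agreement accumulate at every
point both from the upper right and from the lower left.
-/

open Set MeasureTheory Filter Topology

theorem MonotoneOn.mul_sub_le_sub_of_ae_hasDerivAt {g : ℝ → ℝ} {m x y : ℝ} (hxy : x ≤ y)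
    (hg : MonotoneOn g (Icc x y)) (hd : ∀ᵐ t, t ∈ Ioo x y → HasDerivAt g m t) :
    m * (y - x) ≤ g y - g x := by
  have hint : ∫ t in x..y, deriv g t = m * (y - x) := by
    rw [intervalIntegral.integral_of_le hxy, integral_Ioc_eq_integral_Ioo,
      setIntegral_congr_ae measurableSet_Ioo (hd.mono fun t ht hmem => (ht hmem).deriv)]
    simp [hxy, mul_comm]
  have hbounds := (uIcc_of_le hxy ▸ hg).intervalIntegral_deriv_mem_uIcc
  rw [hint, uIcc_of_le (sub_nonneg.2 (hg (left_mem_Icc.2 hxy) (right_mem_Icc.2 hxy) hxy))]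
    at hbounds
  exact hbounds.2

theorem MonotoneOn.eq_of_ae_hasDerivAt_of_mapsTo {g : ℝ → ℝ} {m α β A B : ℝ}
    (hg : MonotoneOn g (Ioo α β)) (hd : ∀ᵐ t, t ∈ Ioo α β → HasDerivAt g m t)
    (hmaps : MapsTo g (Ioo α β) (Icc A B)) (hAB : B - A = m * (β - α)) {t : ℝ}
    (ht : t ∈ Ioo α β) : g t = A + m * (t - α) := by
  have hslope : ∀ x ∈ Ioo α β, ∀ y ∈ Ioo α β, x ≤ y → m * (y - x) ≤ g y - g x :=
    fun x hx y hy hxy => (hg.mono (Icc_subset_Ioo hx.1 hy.2)).mul_sub_le_sub_of_ae_hasDerivAt hxy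
      (hd.mono fun t ht hmem => ht (Ioo_subset_Ioo hx.1.le hy.2.le hmem))
  have hlower : A + m * (t - α) ≤ g t := by
    refine le_of_tendsto (f := fun x => A + m * (t - x)) (x := 𝓝[>] α)
      ((Continuous.tendsto (by fun_prop) α).mono_left nhdsWithin_le_nhds) ?_
    filter_upwards [Ioo_mem_nhdsGT ht.1] with x hx
    have hxΩ : x ∈ Ioo α β := ⟨hx.1, hx.2.trans ht.2⟩
    linarith [hslope x hxΩ t ht hx.2.le, (hmaps hxΩ).1]
  have hupper : g t ≤ B - m * (β - t) := by
    refine ge_of_tendsto (f := fun y => B - m * (y - t)) (x := 𝓝[<] β)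
      ((Continuous.tendsto (by fun_prop) β).mono_left nhdsWithin_le_nhds) ?_
    filter_upwards [Ioo_mem_nhdsLT ht.2] with y hy
    have hyΩ : y ∈ Ioo α β := ⟨ht.1.trans hy.1, hy.2⟩
    linarith [hslope t ht y hyΩ hy.1.le, (hmaps hyΩ).2]
  linarith

theorem LinearEquiv.ae_comp_iff {E : Type*} [NormedAddCommGroup E] [NormedSpace ℝ E]
    [MeasurableSpace E] [BorelSpace E] [FiniteDimensional ℝ E] (μ : Measure E)
    [μ.IsAddHaarMeasure] (e : E ≃ₗ[ℝ] E) {P : E → Prop} :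
    (∀ᵐ x ∂μ, P (e x)) ↔ ∀ᵐ y ∂μ, P y := by
  have hqmp (e : E ≃ₗ[ℝ] E) := Measure.LinearMap.quasiMeasurePreserving μ _ e.isUnit_det'.ne_zero
  exact ⟨fun h => by simpa using (hqmp e.symm).ae h, (hqmp e).ae⟩

theorem MonotoneOn.eqOn_of_ae_eq {μ : Measure (ℝ × ℝ)} [μ.IsOpenPosMeasure] {U : Set (ℝ × ℝ)}
    {u f : ℝ × ℝ → ℝ} (hu : MonotoneOn u U) (hU : IsOpen U) (hf : Continuous f)
    (hae : ∀ᵐ p ∂μ, p ∈ U → u p = f p) : EqOn u f U := by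
  intro p hp
  have hclosure : ∀ V, IsOpen V → p ∈ closure V →
      p ∈ closure (U ∩ V ∩ {q | q ∈ U → u q = f q}) := fun V hV hpV =>
    closure_minimal ((Measure.dense_of_ae hae).open_subset_closure_inter (hU.inter hV))
      isClosed_closure (hU.inter_closure ⟨hp, hpV⟩)
  have hle : u p ≤ f p := by
    refine closure_minimal (s := U ∩ (Ioi p.1 ×ˢ Ioi p.2) ∩ {q | q ∈ U → u q = f q})
      ?_ (isClosed_le continuous_const hf)
      (hclosure _ (isOpen_Ioi.prod isOpen_Ioi) (by simp [closure_prod_eq]))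
    rintro q ⟨⟨hqU, hpq⟩, hq⟩
    exact (hu hp hqU ⟨hpq.1.le, hpq.2.le⟩).trans_eq (hq hqU)
  have hge : f p ≤ u p := by
    refine closure_minimal (s := U ∩ (Iio p.1 ×ˢ Iio p.2) ∩ {q | q ∈ U → u q = f q})
      ?_ (isClosed_le hf continuous_const)
      (hclosure _ (isOpen_Iio.prod isOpen_Iio) (by simp [closure_prod_eq]))
    rintro q ⟨⟨hqU, hqp⟩, hq⟩
    exact (hq hqU).symm.trans_le (hu hqU hp ⟨hqp.1.le, hqp.2.le⟩)
  exact hle.antisymm hge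

def rhombus (a b : ℝ) : Set (ℝ × ℝ) := {p | a * |p.1| + b * |p.2| < 1}

theorem isOpen_rhombus (a b : ℝ) : IsOpen (rhombus a b) :=
  isOpen_lt (by fun_prop) continuous_const

section rhombusChart

variable {a b : ℝ}

noncomputable def rhombusChart (ha : a ≠ 0) (hb : b ≠ 0) : (ℝ × ℝ) ≃ₗ[ℝ] ℝ × ℝ where
  toFun z := ((z.1 + z.2) / (2 * a), (z.2 - z.1) / (2 * b))
  invFun p := (a * p.1 - b * p.2, a * p.1 + b * p.2)
  map_add' z w := by ext <;> simp only [Prod.fst_add, Prod.snd_add] <;> ring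
  map_smul' r z := by
    ext <;> simp only [Prod.smul_fst, Prod.smul_snd, smul_eq_mul, RingHom.id_apply] <;> ring
  left_inv z := by ext <;> field_simp <;> ring
  right_inv p := by ext <;> field_simp <;> ring

variable (ha : a ≠ 0) (hb : b ≠ 0)

@[simp]
theorem rhombusChart_apply (z : ℝ × ℝ) :
    rhombusChart ha hb z = ((z.1 + z.2) / (2 * a), (z.2 - z.1) / (2 * b)) := rfl

theorem mul_fst_add_mul_snd_rhombusChart (z : ℝ × ℝ) :
    a * (rhombusChart ha hb z).1 + b * (rhombusChart ha hb z).2 = z.2 := by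
  simp only [rhombusChart_apply]
  field_simp
  ring

end rhombusChart

theorem preimage_rhombusChart_rhombus {a b : ℝ} (ha : 0 < a) (hb : 0 < b) :
    rhombusChart ha.ne' hb.ne' ⁻¹' rhombus a b = Ioo (-1) 1 ×ˢ Ioo (-1) 1 := by
  ext ⟨s, t⟩
  have hx : a * |(s + t) / (2 * a)| = |s + t| / 2 := by
    rw [abs_div, abs_of_pos (by positivity : 0 < 2 * a)]; field_simp
  have hy : b * |(t - s) / (2 * b)| = |t - s| / 2 := by
    rw [abs_div, abs_of_pos (by positivity : 0 < 2 * b)]; field_simp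
  simp only [mem_preimage, rhombus, mem_ofPred_eq, rhombusChart_apply, hx, hy, mem_prod, mem_Ioo]
  grind [abs_cases]

theorem hasDerivAt_comp_rhombusChart {a b c : ℝ} (ha : a ≠ 0) (hb : b ≠ 0) {u : ℝ × ℝ → ℝ}
    {s t : ℝ} (hu : DifferentiableAt ℝ u (rhombusChart ha hb (s, t)))
    (hux : fderiv ℝ u (rhombusChart ha hb (s, t)) (1, 0) = c * a)
    (huy : fderiv ℝ u (rhombusChart ha hb (s, t)) (0, 1) = c * b) :
    HasDerivAt (fun τ => u (rhombusChart ha hb (s, τ))) c t := by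
  have hline : HasDerivAt (fun τ => rhombusChart ha hb (s, τ)) ((2 * a)⁻¹, (2 * b)⁻¹) t := by
    simp only [rhombusChart_apply]
    exact ((hasDerivAt_id t).const_add s |>.div_const _).prodMk
      ((hasDerivAt_id t).sub_const s |>.div_const _) |>.congr_deriv (by simp)
  have hdir : ((2 * a)⁻¹, (2 * b)⁻¹) =
      (2 * a)⁻¹ • ((1 : ℝ), (0 : ℝ)) + (2 * b)⁻¹ • ((0 : ℝ), (1 : ℝ)) := by
    ext <;> simp
  have hslope : fderiv ℝ u (rhombusChart ha hb (s, t)) ((2 * a)⁻¹, (2 * b)⁻¹) = c := by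
    rw [hdir, map_add, map_smul, map_smul, hux, huy, smul_eq_mul, smul_eq_mul]
    field_simp
    ring
  simpa only [Function.comp_def, hslope] using hu.hasFDerivAt.comp_hasDerivAt t hline

theorem monotone_rhombusChart_snd {a b : ℝ} (ha : 0 < a) (hb : 0 < b) (s : ℝ) :
    Monotone fun t => rhombusChart ha.ne' hb.ne' (s, t) := fun t t' htt' =>
  ⟨div_le_div_of_nonneg_right (by linarith) (by positivity),
    div_le_div_of_nonneg_right (by linarith) (by positivity)⟩

theorem apply_rhombusChart_eq_of_ae_hasDerivAt {a b c : ℝ} (ha : 0 < a) (hb : 0 < b)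
    {u : ℝ × ℝ → ℝ} (hmono : MonotoneOn u (rhombus a b))
    (hval : MapsTo u (rhombus a b) (Icc (-c) c)) {s : ℝ} (hs : s ∈ Ioo (-1) 1)
    (hd : ∀ᵐ t, t ∈ Ioo (-1) 1 → HasDerivAt (fun τ => u (rhombusChart ha.ne' hb.ne' (s, τ))) c t)
    {t : ℝ} (ht : t ∈ Ioo (-1) 1) : u (rhombusChart ha.ne' hb.ne' (s, t)) = c * t := by
  have hmem : ∀ τ ∈ Ioo (-1 : ℝ) 1, rhombusChart ha.ne' hb.ne' (s, τ) ∈ rhombus a b :=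
    fun τ hτ => by rw [← mem_preimage, preimage_rhombusChart_rhombus ha hb]; exact ⟨hs, hτ⟩
  have hline : MonotoneOn (fun τ => u (rhombusChart ha.ne' hb.ne' (s, τ))) (Ioo (-1) 1) :=
    fun x hx y hy hxy => hmono (hmem x hx) (hmem y hy) (monotone_rhombusChart_snd ha hb s hxy)
  rw [hline.eq_of_ae_hasDerivAt_of_mapsTo hd (fun τ hτ => hval (hmem τ hτ)) (by ring) ht]
  ring

theorem ae_eq_linear_of_ae_fderiv {a b c : ℝ} (ha : 0 < a) (hb : 0 < b) {u : ℝ × ℝ → ℝ}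
    (hmono : MonotoneOn u (rhombus a b)) (hval : MapsTo u (rhombus a b) (Icc (-c) c))
    (hderiv : ∀ᵐ p, p ∈ rhombus a b → DifferentiableAt ℝ u p ∧
      fderiv ℝ u p (1, 0) = c * a ∧ fderiv ℝ u p (0, 1) = c * b) :
    ∀ᵐ p, p ∈ rhombus a b → u p = c * (a * p.1 + b * p.2) := by
  set e := rhombusChart ha.ne' hb.ne'
  have hmem {s t : ℝ} : e (s, t) ∈ rhombus a b ↔ s ∈ Ioo (-1) 1 ∧ t ∈ Ioo (-1) 1 := by
    rw [← mem_preimage, preimage_rhombusChart_rhombus ha hb, mem_prod]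
  rw [← LinearEquiv.ae_comp_iff volume e] at hderiv ⊢
  have hslices : ∀ᵐ s : ℝ, ∀ t, e (s, t) ∈ rhombus a b →
      u (e (s, t)) = c * (a * (e (s, t)).1 + b * (e (s, t)).2) := by
    filter_upwards [Measure.ae_ae_of_ae_prod hderiv] with s hs t hst
    rw [hmem] at hst
    rw [mul_fst_add_mul_snd_rhombusChart]
    refine apply_rhombusChart_eq_of_ae_hasDerivAt ha hb hmono hval hst.1 ?_ hst.2
    filter_upwards [hs] with τ hτ hτmem
    obtain ⟨hu, hux, huy⟩ := hτ (hmem.2 ⟨hst.1, hτmem⟩)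
    exact hasDerivAt_comp_rhombusChart _ _ hu hux huy
  exact (Measure.quasiMeasurePreserving_fst.ae hslices).mono fun z hz => hz z.2

theorem stmt16_general (a b c : ℝ) (ha : 0 < a) (hb : 0 < b)
    (u : ℝ × ℝ → ℝ)
    (hval : ∀ p ∈ {p : ℝ × ℝ | a * |p.1| + b * |p.2| < 1}, u p ∈ Set.Icc (-c) c)
    (hmono : ∀ p ∈ {p : ℝ × ℝ | a * |p.1| + b * |p.2| < 1},
      ∀ q ∈ {p : ℝ × ℝ | a * |p.1| + b * |p.2| < 1},
        p.1 ≤ q.1 → p.2 ≤ q.2 → u p ≤ u q)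
    (hderiv : ∀ᵐ p ∂(volume.restrict {p : ℝ × ℝ | a * |p.1| + b * |p.2| < 1}),
      DifferentiableAt ℝ u p ∧ fderiv ℝ u p (1, 0) = c * a ∧
        fderiv ℝ u p (0, 1) = c * b) :
    ∀ p ∈ {p : ℝ × ℝ | a * |p.1| + b * |p.2| < 1},
      u p = c * (a * p.1 + b * p.2) := by
  have hΩ : IsOpen (rhombus a b) := isOpen_rhombus a b
  have hmono' : MonotoneOn u (rhombus a b) := fun p hp q hq hpq => hmono p hp q hq hpq.1 hpq.2
  have hlin := ae_eq_linear_of_ae_fderiv ha hb hmono' hval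
    ((ae_restrict_iff' hΩ.measurableSet).1 hderiv)
  exact hmono'.eqOn_of_ae_eq hΩ (by fun_prop) hlin

/-- On the open rhombus `a|x| + b|y| < 1`, a doubly increasing function with values
in `[-c, c]` whose partial derivatives equal `c·a` and `c·b` almost everywhere must
be the linear function `c(ax + by)` everywhere. -/
theorem stmt16 (a b c : ℝ) (ha : 0 < a) (hb : 0 < b) (hc : 0 < c)
    (u : ℝ × ℝ → ℝ)
    (hval : ∀ p ∈ {p : ℝ × ℝ | a * |p.1| + b * |p.2| < 1}, u p ∈ Set.Icc (-c) c)
    (hmono : ∀ p ∈ {p : ℝ × ℝ | a * |p.1| + b * |p.2| < 1},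
      ∀ q ∈ {p : ℝ × ℝ | a * |p.1| + b * |p.2| < 1},
        p.1 ≤ q.1 → p.2 ≤ q.2 → u p ≤ u q)
    (hderiv : ∀ᵐ p ∂(volume.restrict {p : ℝ × ℝ | a * |p.1| + b * |p.2| < 1}),
      DifferentiableAt ℝ u p ∧ fderiv ℝ u p (1, 0) = c * a ∧
        fderiv ℝ u p (0, 1) = c * b) :
    ∀ p ∈ {p : ℝ × ℝ | a * |p.1| + b * |p.2| < 1},
      u p = c * (a * p.1 + b * p.2) :=
  stmt16_general a b c ha hb u hval hmono hderiv
end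

section
/- Let Ω be an open subset of ℝ², c, d > 0, let u : Ω → [−c,c] be doubly increasing and v : Ω → [−d,d] be decreasing in x and increasing in y. Suppose u and v are everywhere differentiable with nowhere-vanishing partial derivatives (u_x, u_y > 0 and v_x < 0 < v_y), and that the image of Ω under φ(x,y) = (u(x,y), v(x,y)) equals the open rectangle (−c,c)×(−d,d). Then any doubly increasing w : Ω → [−c,c] whose partial derivatives coincide with those of u almost everywhere satisfies w = u everywhere on Ω. -/
/-!
The map `Φ = (u, v)` sends `Ω` onto the rectangle `R = (-c, c) × (-d, d)`. Monotonicity of `u` and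
`v` makes any right inverse `g : R → Ω` of `Φ` continuous, and as the Jacobian `u_x v_y - u_y v_x`
is positive, `g` is differentiable. Since `Φ` maps null sets to null sets, for almost every `b` the
function `f a = w (g (a, b))` is monotone, takes values in `[-c, c]` and has derivative `1` almost
everywhere; the change of variables formula gives `f y - f x ≥ y - x`, and the bounds then force
`f a = a`. So `w = u` on almost every level set of `v`. Finally, for `p ∈ Ω` and `a > u p` the point
`g (a, v p)` lies strictly north-east of `p`, hence so do the points `g (a, b)` with `b` near `v p`,
among them points of good level sets: monotonicity of `w` gives `w p ≤ a`, and symmetrically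
`a ≤ w p` for `a < u p`.
-/

open Set Filter Topology MeasureTheory

section LineDerivative

variable {E : Type*} [NormedAddCommGroup E] [NormedSpace ℝ E] {F : E → ℝ} {p e : E}

theorem eventually_lt_apply_add_smul (hF : DifferentiableAt ℝ F p) (he : 0 < fderiv ℝ F p e) :
    ∀ᶠ s in 𝓝[>] (0 : ℝ), F p < F (p + s • e) := by
  filter_upwards [(hF.hasFDerivAt.hasLineDerivAt e).tendsto_slope_zero_right.eventually
    (lt_mem_nhds he), self_mem_nhdsWithin] with s hslope (hs : 0 < s)
  simpa [hs] using hslope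

theorem eventually_apply_add_smul_lt (hF : DifferentiableAt ℝ F p) (he : fderiv ℝ F p e < 0) :
    ∀ᶠ s in 𝓝[>] (0 : ℝ), F (p + s • e) < F p := by
  simpa using eventually_lt_apply_add_smul hF.neg (by simpa [fderiv_neg] using he)

theorem IsOpen.eventually_add_smul_mem {Ω : Set E} (hΩ : IsOpen Ω) (hp : p ∈ Ω) (e : E) :
    ∀ᶠ s in 𝓝[>] (0 : ℝ), p + s • e ∈ Ω := by
  refine nhdsWithin_le_nhds (ContinuousAt.preimage_mem_nhds ?_ (by simpa using hΩ.mem_nhds hp))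
  fun_prop

theorem lt_of_fderiv_pos_of_eventually_le {Ω : Set E} {q : E} (hΩ : IsOpen Ω) (hp : p ∈ Ω)
    (hF : DifferentiableAt ℝ F p) (he : 0 < fderiv ℝ F p e)
    (hle : ∀ᶠ s in 𝓝[>] (0 : ℝ), p + s • e ∈ Ω → F (p + s • e) ≤ F q) : F p < F q := by
  obtain ⟨s, hlt, hmem, hsq⟩ :=
    ((eventually_lt_apply_add_smul hF he).and ((hΩ.eventually_add_smul_mem hp e).and hle)).exists
  exact hlt.trans_le (hsq hmem)

end LineDerivative

theorem ContinuousLinearMap.ext_prod_real {L L' : ℝ × ℝ →L[ℝ] ℝ} (h₁ : L (1, 0) = L' (1, 0))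
    (h₂ : L (0, 1) = L' (0, 1)) : L = L' :=
  prod_ext (ext_ring (by simpa using h₁)) (ext_ring (by simpa using h₂))

theorem ContinuousLinearMap.injective_prod_of_det_ne_zero (L₁ L₂ : ℝ × ℝ →L[ℝ] ℝ)
    (h : L₁ (1, 0) * L₂ (0, 1) - L₁ (0, 1) * L₂ (1, 0) ≠ 0) : Function.Injective (L₁.prod L₂) := by
  have hdecomp : ∀ (L : ℝ × ℝ →L[ℝ] ℝ) (z : ℝ × ℝ), L z = z.1 * L (1, 0) + z.2 * L (0, 1) := by
    intro L z
    conv_lhs => rw [show z = z.1 • (1, 0) + z.2 • (0, 1) by ext <;> simp]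
    rw [map_add, map_smul, map_smul, smul_eq_mul, smul_eq_mul]
  refine (injective_iff_map_eq_zero _).2 fun z hz => ?_
  have h₁ : z.1 * L₁ (1, 0) + z.2 * L₁ (0, 1) = 0 := (hdecomp L₁ z).symm.trans congr($hz.1)
  have h₂ : z.1 * L₂ (1, 0) + z.2 * L₂ (0, 1) = 0 := (hdecomp L₂ z).symm.trans congr($hz.2)
  ext
  · exact (mul_eq_zero.1 (by linear_combination L₂ (0, 1) * h₁ - L₁ (0, 1) * h₂ :
      z.1 * (L₁ (1, 0) * L₂ (0, 1) - L₁ (0, 1) * L₂ (1, 0)) = 0)).resolve_right h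
  · exact (mul_eq_zero.1 (by linear_combination L₁ (1, 0) * h₂ - L₂ (1, 0) * h₁ :
      z.2 * (L₁ (1, 0) * L₂ (0, 1) - L₁ (0, 1) * L₂ (1, 0)) = 0)).resolve_right h

theorem hasFDerivAt_comp_of_rightInverse {u v w : ℝ × ℝ → ℝ} {g : ℝ × ℝ → ℝ × ℝ} {z : ℝ × ℝ}
    (hgc : ContinuousAt g z) (hg : ∀ᶠ y in 𝓝 z, (u (g y), v (g y)) = y)
    (hu : DifferentiableAt ℝ u (g z)) (hv : DifferentiableAt ℝ v (g z))
    (hdet : fderiv ℝ u (g z) (1, 0) * fderiv ℝ v (g z) (0, 1)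
      - fderiv ℝ u (g z) (0, 1) * fderiv ℝ v (g z) (1, 0) ≠ 0)
    (hw : HasFDerivAt w (fderiv ℝ u (g z)) (g z)) :
    HasFDerivAt (w ∘ g) (ContinuousLinearMap.fst ℝ ℝ ℝ) z := by
  let A : (ℝ × ℝ) ≃L[ℝ] ℝ × ℝ := (LinearEquiv.ofInjectiveEndo _
    (ContinuousLinearMap.injective_prod_of_det_ne_zero _ _ hdet)).toContinuousLinearEquiv
  have hA : HasFDerivAt (fun p => (u p, v p)) (A : (ℝ × ℝ) →L[ℝ] ℝ × ℝ) (g z) :=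
    hu.hasFDerivAt.prodMk hv.hasFDerivAt
  refine (hw.comp z (hA.of_local_left_inverse hgc hg)).congr_fderiv
    (ContinuousLinearMap.ext fun y => ?_)
  exact congr($(A.apply_symm_apply y).1)

theorem sub_le_sub_of_monotoneOn_of_ae_hasDerivAt_one {f : ℝ → ℝ} {a b : ℝ} (hab : a ≤ b)
    (hf : MonotoneOn f (Icc a b)) (hd : ∀ᵐ x, x ∈ Ioo a b → HasDerivAt f 1 x) :
    b - a ≤ f b - f a := by
  set S := Ioo a b ∩ ({x | DifferentiableAt ℝ f x} ∩ deriv f ⁻¹' {1})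
  have hS : MeasurableSet S := measurableSet_Ioo.inter
    ((measurableSet_of_differentiableAt ℝ f).inter (measurable_deriv f (measurableSet_singleton 1)))
  have hSd : ∀ x ∈ S, HasDerivAt f 1 x := fun x hx => hx.2.2 ▸ hx.2.1.hasDerivAt
  have hvol : volume S = volume (Ioo a b) :=
    (measure_mono inter_subset_left).antisymm <| measure_mono_ae <| hd.mono fun x hx hxab =>
      ⟨hxab, (hx hxab).differentiableAt, (hx hxab).deriv⟩
  have himage : volume (f '' S) = volume S := by
    rw [← lintegral_deriv_eq_volume_image_of_monotoneOn hS (f' := fun _ => 1)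
      (fun x hx => (hSd x hx).hasDerivWithinAt)
      (hf.mono (inter_subset_left.trans Ioo_subset_Icc_self))]
    simp
  have hsub : f '' S ⊆ Icc (f a) (f b) := by
    rintro _ ⟨x, ⟨hx, -⟩, rfl⟩
    exact ⟨hf (left_mem_Icc.2 hab) (Ioo_subset_Icc_self hx) hx.1.le,
      hf (Ioo_subset_Icc_self hx) (right_mem_Icc.2 hab) hx.2.le⟩
  have hle := (himage.trans hvol).symm.le.trans (measure_mono hsub)
  rw [Real.volume_Ioo, Real.volume_Icc] at hle
  exact (ENNReal.ofReal_le_ofReal_iff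
    (sub_nonneg.2 (hf (left_mem_Icc.2 hab) (right_mem_Icc.2 hab) hab))).1 hle

theorem eq_self_of_monotoneOn_of_ae_hasDerivAt_one {f : ℝ → ℝ} {a b : ℝ}
    (hf : MonotoneOn f (Ioo a b)) (hmaps : MapsTo f (Ioo a b) (Icc a b))
    (hd : ∀ᵐ x, x ∈ Ioo a b → HasDerivAt f 1 x) : ∀ x ∈ Ioo a b, f x = x := by
  have hgrowth : ∀ x ∈ Ioo a b, ∀ y ∈ Ioo a b, x ≤ y → y - x ≤ f y - f x := fun x hx y hy hxy =>
    sub_le_sub_of_monotoneOn_of_ae_hasDerivAt_one hxy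
      (hf.mono (Icc_subset_Ioo hx.1 hy.2))
      (hd.mono fun t ht htxy => ht (Ioo_subset_Ioo hx.1.le hy.2.le htxy))
  intro x hx
  apply le_antisymm
  · by_contra! h
    obtain ⟨y, hy, hyb⟩ := exists_between (max_lt hx.2 (by linarith : b - (f x - x) < b))
    have hy' : y ∈ Ioo a b := ⟨hx.1.trans_le ((le_max_left _ _).trans hy.le), hyb⟩
    linarith [hgrowth x hx y hy' ((le_max_left _ _).trans hy.le), (hmaps hy').2,
      le_max_right x (b - (f x - x))]
  · by_contra! h
    obtain ⟨y, hay, hy⟩ := exists_between (lt_min hx.1 (by linarith : a < a + (x - f x)))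
    have hy' : y ∈ Ioo a b := ⟨hay, (hy.le.trans (min_le_left _ _)).trans_lt hx.2⟩
    linarith [hgrowth y hy' x hx (hy.le.trans (min_le_left _ _)), (hmaps hy').1,
      min_le_right x (a + (x - f x))]

theorem Filter.Eventually.exists_of_ae {X : Type*} [TopologicalSpace X] [MeasurableSpace X]
    {μ : Measure X} [μ.IsOpenPosMeasure] {x : X} {p q : X → Prop} (hp : ∀ᶠ y in 𝓝 x, p y)
    (hq : ∀ᵐ y ∂μ, q y) : ∃ y, p y ∧ q y := by
  by_contra! h
  exact (Measure.measure_pos_of_mem_nhds μ hp).ne' (measure_mono_null h (ae_iff.1 hq))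

theorem ae_ae_notMem_image_of_measure_zero {Φ : ℝ × ℝ → ℝ × ℝ} {N : Set (ℝ × ℝ)}
    (hΦ : DifferentiableOn ℝ Φ N) (hN : volume N = 0) : ∀ᵐ b : ℝ, ∀ᵐ a : ℝ, (a, b) ∉ Φ '' N := by
  have h := measure_eq_zero_iff_ae_notMem.1
    (addHaar_image_eq_zero_of_differentiableOn_of_addHaar_eq_zero volume hΦ hN)
  rw [Measure.volume_eq_prod] at h
  exact Measure.ae_ae_of_ae_prod (Measure.measurePreserving_swap.quasiMeasurePreserving.ae h)

section MonotoneCoordinates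

variable {Ω : Set (ℝ × ℝ)} {u v : ℝ × ℝ → ℝ} {p q : ℝ × ℝ}

theorem v_lt_of_fst_lt (hΩ : IsOpen Ω)
    (hv : ∀ p ∈ Ω, ∀ q ∈ Ω, q.1 ≤ p.1 → p.2 ≤ q.2 → v p ≤ v q) (hp : p ∈ Ω) (hq : q ∈ Ω)
    (hvp : DifferentiableAt ℝ v p) (hvx : fderiv ℝ v p (1, 0) < 0) (h₁ : q.1 < p.1)
    (h₂ : p.2 ≤ q.2) : v p < v q := by
  refine lt_of_fderiv_pos_of_eventually_le hΩ hp hvp (e := -(1, 0))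
    (by rw [map_neg]; exact neg_pos.2 hvx) ?_
  filter_upwards [Ioo_mem_nhdsGT (sub_pos.2 h₁)] with s hs hmem
  exact hv _ hmem q hq (by simp; linarith [hs.2]) (by simpa using h₂)

theorem v_lt_of_snd_lt (hΩ : IsOpen Ω)
    (hv : ∀ p ∈ Ω, ∀ q ∈ Ω, q.1 ≤ p.1 → p.2 ≤ q.2 → v p ≤ v q) (hp : p ∈ Ω) (hq : q ∈ Ω)
    (hvp : DifferentiableAt ℝ v p) (hvy : 0 < fderiv ℝ v p (0, 1)) (h₁ : q.1 ≤ p.1)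
    (h₂ : p.2 < q.2) : v p < v q := by
  refine lt_of_fderiv_pos_of_eventually_le hΩ hp hvp (e := (0, 1)) hvy ?_
  filter_upwards [Ioo_mem_nhdsGT (sub_pos.2 h₂)] with s hs hmem
  exact hv _ hmem q hq (by simpa using h₁) (by simp; linarith [hs.2])

theorem fst_lt_and_snd_lt_of_lt_of_eq (hΩ : IsOpen Ω) (hu : MonotoneOn u Ω)
    (hv : ∀ p ∈ Ω, ∀ q ∈ Ω, q.1 ≤ p.1 → p.2 ≤ q.2 → v p ≤ v q)
    (hvd : ∀ p ∈ Ω, DifferentiableAt ℝ v p ∧ fderiv ℝ v p (1, 0) < 0 ∧ 0 < fderiv ℝ v p (0, 1))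
    (hp : p ∈ Ω) (hq : q ∈ Ω) (hlt : u p < u q) (heq : v p = v q) : p.1 < q.1 ∧ p.2 < q.2 := by
  have hnot : ¬q ≤ p := fun h => (hu hq hp h).not_gt hlt
  constructor
  · by_contra! h₁
    rcases le_or_gt q.2 p.2 with h₂ | h₂
    · exact hnot ⟨h₁, h₂⟩
    · exact (v_lt_of_snd_lt hΩ hv hp hq (hvd p hp).1 (hvd p hp).2.2 h₁ h₂).ne heq
  · by_contra! h₂
    rcases le_or_gt q.1 p.1 with h₁ | h₁
    · exact hnot ⟨h₁, h₂⟩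
    · exact (v_lt_of_fst_lt hΩ hv hq hp (hvd q hq).1 (hvd q hq).2.1 h₁ h₂).ne heq.symm

theorem u_le_or_v_le_of_fst_le (hu : MonotoneOn u Ω)
    (hv : ∀ p ∈ Ω, ∀ q ∈ Ω, q.1 ≤ p.1 → p.2 ≤ q.2 → v p ≤ v q)
    (hp : p ∈ Ω) (hq : q ∈ Ω) (h : p.1 ≤ q.1) : u p ≤ u q ∨ v q ≤ v p := by
  rcases le_or_gt p.2 q.2 with h₂ | h₂
  · exact .inl (hu hp hq ⟨h, h₂⟩)
  · exact .inr (hv q hq p hp h h₂.le)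

theorem u_le_or_v_le_of_snd_le (hu : MonotoneOn u Ω)
    (hv : ∀ p ∈ Ω, ∀ q ∈ Ω, q.1 ≤ p.1 → p.2 ≤ q.2 → v p ≤ v q)
    (hp : p ∈ Ω) (hq : q ∈ Ω) (h : p.2 ≤ q.2) : u p ≤ u q ∨ v p ≤ v q := by
  rcases le_or_gt p.1 q.1 with h₁ | h₁
  · exact .inl (hu hp hq ⟨h₁, h⟩)
  · exact .inr (hv p hp q hq h₁.le h)

theorem exists_mem_apply_eq_of_ae {w : ℝ × ℝ → ℝ} {g : ℝ × ℝ → ℝ × ℝ} {a₀ a₁ a b₀ : ℝ}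
    {B : Set ℝ} {O : Set (ℝ × ℝ)} (hB : IsOpen B) (ha : a ∈ Ioo a₀ a₁) (hb₀ : b₀ ∈ B)
    (hgc : ContinuousOn g (Ioo a₀ a₁ ×ˢ B)) (hgΩ : MapsTo g (Ioo a₀ a₁ ×ˢ B) Ω)
    (hgood : ∀ᵐ b, b ∈ B → ∀ a ∈ Ioo a₀ a₁, w (g (a, b)) = a) (hO : O ∈ 𝓝 (g (a, b₀))) :
    ∃ q ∈ O ∩ Ω, w q = a := by
  have hz : (a, b₀) ∈ Ioo a₀ a₁ ×ˢ B := ⟨ha, hb₀⟩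
  have hcont : ContinuousAt (fun b => g (a, b)) b₀ :=
    ((hgc _ hz).continuousAt ((isOpen_Ioo.prod hB).mem_nhds hz)).comp (by fun_prop)
  obtain ⟨b, ⟨hbO, hbB⟩, hb⟩ := ((hcont.eventually_mem hO).and (hB.mem_nhds hb₀)).exists_of_ae hgood
  exact ⟨g (a, b), ⟨hbO, hgΩ ⟨ha, hbB⟩⟩, hb hbB a ha⟩

structure IsMonotoneCoordinatePair (Ω : Set (ℝ × ℝ)) (u v : ℝ × ℝ → ℝ) : Prop where
  isOpen : IsOpen Ω
  monotoneOn_u : MonotoneOn u Ω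
  v_le : ∀ p ∈ Ω, ∀ q ∈ Ω, q.1 ≤ p.1 → p.2 ≤ q.2 → v p ≤ v q
  u_deriv : ∀ p ∈ Ω, DifferentiableAt ℝ u p ∧ 0 < fderiv ℝ u p (1, 0) ∧ 0 < fderiv ℝ u p (0, 1)
  v_deriv : ∀ p ∈ Ω, DifferentiableAt ℝ v p ∧ fderiv ℝ v p (1, 0) < 0 ∧ 0 < fderiv ℝ v p (0, 1)

namespace IsMonotoneCoordinatePair

variable {w : ℝ × ℝ → ℝ} {U : Set (ℝ × ℝ)} {g : ℝ × ℝ → ℝ × ℝ} {a₀ a₁ : ℝ}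

/- A point `r ∈ Ω` just to the right of `g z` has `z.1 < u r` and `v r < z.2`; these inequalities
persist for `z'` near `z`, and by `u_le_or_v_le_of_fst_le` they keep `g z'` to the left of `r`. -/
theorem tendsto_fst_comp_rightInverse (h : IsMonotoneCoordinatePair Ω u v) (hgΩ : MapsTo g U Ω)
    (hg : ∀ z ∈ U, (u (g z), v (g z)) = z) {z : ℝ × ℝ} (hz : z ∈ U) :
    Tendsto (fun z' => (g z').1) (𝓝[U] z) (𝓝 (g z).1) := by
  obtain ⟨hΩ, hu, hv, hud, hvd⟩ := h
  obtain ⟨hu₀, hux, -⟩ := hud (g z) (hgΩ hz)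
  obtain ⟨hv₀, hvx, -⟩ := hvd (g z) (hgΩ hz)
  have hfst : Tendsto Prod.fst (𝓝[U] z) (𝓝 (u (g z))) :=
    (congr($(hg z hz).1) : u (g z) = z.1) ▸ continuous_fst.continuousWithinAt
  have hsnd : Tendsto Prod.snd (𝓝[U] z) (𝓝 (v (g z))) :=
    (congr($(hg z hz).2) : v (g z) = z.2) ▸ continuous_snd.continuousWithinAt
  refine tendsto_order.2 ⟨fun a ha => ?_, fun a ha => ?_⟩
  · obtain ⟨s, ⟨-, hs⟩, hr, hur, hvr⟩ :=
      ((eventually_mem_set.2 (Ioo_mem_nhdsGT (sub_pos.2 ha))).and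
      ((hΩ.eventually_add_smul_mem (hgΩ hz) (-(1, 0))).and
      ((eventually_apply_add_smul_lt hu₀ (by rw [map_neg]; exact neg_neg_of_pos hux)).and
      (eventually_lt_apply_add_smul hv₀ (by rw [map_neg]; exact neg_pos.2 hvx))))).exists
    filter_upwards [self_mem_nhdsWithin, hfst.eventually (lt_mem_nhds hur),
      hsnd.eventually (gt_mem_nhds hvr)] with z' hz' h₁ h₂
    by_contra! hle
    rcases u_le_or_v_le_of_fst_le hu hv (hgΩ hz') hr (by simp; linarith) with h | h <;>
      linarith [congr($(hg z' hz').1), congr($(hg z' hz').2)]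
  · obtain ⟨s, ⟨-, hs⟩, hr, hur, hvr⟩ :=
      ((eventually_mem_set.2 (Ioo_mem_nhdsGT (sub_pos.2 ha))).and
      ((hΩ.eventually_add_smul_mem (hgΩ hz) (1, 0)).and
      ((eventually_lt_apply_add_smul hu₀ hux).and (eventually_apply_add_smul_lt hv₀ hvx)))).exists
    filter_upwards [self_mem_nhdsWithin, hfst.eventually (gt_mem_nhds hur),
      hsnd.eventually (lt_mem_nhds hvr)] with z' hz' h₁ h₂
    by_contra! hle
    rcases u_le_or_v_le_of_fst_le hu hv hr (hgΩ hz') (by simp; linarith) with h | h <;>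
      linarith [congr($(hg z' hz').1), congr($(hg z' hz').2)]

theorem tendsto_snd_comp_rightInverse (h : IsMonotoneCoordinatePair Ω u v) (hgΩ : MapsTo g U Ω)
    (hg : ∀ z ∈ U, (u (g z), v (g z)) = z) {z : ℝ × ℝ} (hz : z ∈ U) :
    Tendsto (fun z' => (g z').2) (𝓝[U] z) (𝓝 (g z).2) := by
  obtain ⟨hΩ, hu, hv, hud, hvd⟩ := h
  obtain ⟨hu₀, -, huy⟩ := hud (g z) (hgΩ hz)
  obtain ⟨hv₀, -, hvy⟩ := hvd (g z) (hgΩ hz)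
  have hfst : Tendsto Prod.fst (𝓝[U] z) (𝓝 (u (g z))) :=
    (congr($(hg z hz).1) : u (g z) = z.1) ▸ continuous_fst.continuousWithinAt
  have hsnd : Tendsto Prod.snd (𝓝[U] z) (𝓝 (v (g z))) :=
    (congr($(hg z hz).2) : v (g z) = z.2) ▸ continuous_snd.continuousWithinAt
  refine tendsto_order.2 ⟨fun a ha => ?_, fun a ha => ?_⟩
  · obtain ⟨s, ⟨-, hs⟩, hr, hur, hvr⟩ :=
      ((eventually_mem_set.2 (Ioo_mem_nhdsGT (sub_pos.2 ha))).and
      ((hΩ.eventually_add_smul_mem (hgΩ hz) (-(0, 1))).and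
      ((eventually_apply_add_smul_lt hu₀ (by rw [map_neg]; exact neg_neg_of_pos huy)).and
      (eventually_apply_add_smul_lt hv₀ (by rw [map_neg]; exact neg_neg_of_pos hvy))))).exists
    filter_upwards [self_mem_nhdsWithin, hfst.eventually (lt_mem_nhds hur),
      hsnd.eventually (lt_mem_nhds hvr)] with z' hz' h₁ h₂
    by_contra! hle
    rcases u_le_or_v_le_of_snd_le hu hv (hgΩ hz') hr (by simp; linarith) with h | h <;>
      linarith [congr($(hg z' hz').1), congr($(hg z' hz').2)]
  · obtain ⟨s, ⟨-, hs⟩, hr, hur, hvr⟩ :=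
      ((eventually_mem_set.2 (Ioo_mem_nhdsGT (sub_pos.2 ha))).and
      ((hΩ.eventually_add_smul_mem (hgΩ hz) (0, 1)).and
      ((eventually_lt_apply_add_smul hu₀ huy).and (eventually_lt_apply_add_smul hv₀ hvy)))).exists
    filter_upwards [self_mem_nhdsWithin, hfst.eventually (gt_mem_nhds hur),
      hsnd.eventually (gt_mem_nhds hvr)] with z' hz' h₁ h₂
    by_contra! hle
    rcases u_le_or_v_le_of_snd_le hu hv hr (hgΩ hz') (by simp; linarith) with h | h <;>
      linarith [congr($(hg z' hz').1), congr($(hg z' hz').2)]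

theorem continuousOn_of_rightInverse (h : IsMonotoneCoordinatePair Ω u v) (hgΩ : MapsTo g U Ω)
    (hg : ∀ z ∈ U, (u (g z), v (g z)) = z) : ContinuousOn g U := fun _ hz =>
  (h.tendsto_fst_comp_rightInverse hgΩ hg hz).prodMk_nhds
    (h.tendsto_snd_comp_rightInverse hgΩ hg hz)

theorem apply_rightInverse_eq_of_ae {b : ℝ} (h : IsMonotoneCoordinatePair Ω u v)
    (hw : MonotoneOn w Ω) (hwΩ : MapsTo w Ω (Icc a₀ a₁)) (hU : IsOpen U) (hgΩ : MapsTo g U Ω)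
    (hg : ∀ z ∈ U, (u (g z), v (g z)) = z) (hb : ∀ x ∈ Ioo a₀ a₁, (x, b) ∈ U)
    (hwd : ∀ᵐ x, x ∈ Ioo a₀ a₁ → HasFDerivAt w (fderiv ℝ u (g (x, b))) (g (x, b))) :
    ∀ x ∈ Ioo a₀ a₁, w (g (x, b)) = x := by
  have hgu : ∀ x ∈ Ioo a₀ a₁, u (g (x, b)) = x := fun x hx => congrArg Prod.fst (hg _ (hb x hx))
  have hgv : ∀ x ∈ Ioo a₀ a₁, v (g (x, b)) = b := fun x hx => congrArg Prod.snd (hg _ (hb x hx))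
  refine eq_self_of_monotoneOn_of_ae_hasDerivAt_one (fun x hx y hy hxy => ?_)
    (fun x hx => hwΩ (hgΩ (hb x hx))) ?_
  · rcases hxy.eq_or_lt with rfl | hlt
    · rfl
    obtain ⟨h₁, h₂⟩ := fst_lt_and_snd_lt_of_lt_of_eq h.isOpen h.monotoneOn_u h.v_le h.v_deriv
      (hgΩ (hb x hx)) (hgΩ (hb y hy)) (by rwa [hgu x hx, hgu y hy]) (by rw [hgv x hx, hgv y hy])
    exact hw (hgΩ (hb x hx)) (hgΩ (hb y hy)) ⟨h₁.le, h₂.le⟩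
  · filter_upwards [hwd] with x hx hxI
    have hz := hb x hxI
    obtain ⟨hu₀, hux, huy⟩ := h.u_deriv _ (hgΩ hz)
    obtain ⟨hv₀, hvx, hvy⟩ := h.v_deriv _ (hgΩ hz)
    have hwg := hasFDerivAt_comp_of_rightInverse
      ((h.continuousOn_of_rightInverse hgΩ hg _ hz).continuousAt (hU.mem_nhds hz))
      (eventually_of_mem (hU.mem_nhds hz) hg) hu₀ hv₀
      (by nlinarith [mul_pos hux hvy, mul_neg_of_pos_of_neg huy hvx]) (hx hxI)
    have hslice := hwg.comp_hasDerivAt x ((hasDerivAt_id x).prodMk (hasDerivAt_const x b))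
    rw [ContinuousLinearMap.coe_fst'] at hslice
    exact hslice

theorem ae_apply_rightInverse_eq {B : Set ℝ} (h : IsMonotoneCoordinatePair Ω u v)
    (hw : MonotoneOn w Ω) (hwΩ : MapsTo w Ω (Icc a₀ a₁)) (hB : IsOpen B)
    (hgΩ : MapsTo g (Ioo a₀ a₁ ×ˢ B) Ω) (hg : ∀ z ∈ Ioo a₀ a₁ ×ˢ B, (u (g z), v (g z)) = z)
    (hwd : ∀ᵐ p ∂volume.restrict Ω, HasFDerivAt w (fderiv ℝ u p) p) :
    ∀ᵐ b, b ∈ B → ∀ a ∈ Ioo a₀ a₁, w (g (a, b)) = a := by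
  set N := {p ∈ Ω | ¬HasFDerivAt w (fderiv ℝ u p) p}
  have hN : volume N = 0 := by
    refine measure_mono_null ?_ (ae_iff.1 ((ae_restrict_iff' h.isOpen.measurableSet).1 hwd))
    exact fun p hp hpd => hp.2 (hpd hp.1)
  filter_upwards [ae_ae_notMem_image_of_measure_zero (fun p hp =>
    ((h.u_deriv p hp.1).1.prodMk (h.v_deriv p hp.1).1).differentiableWithinAt) hN] with b hb hbB
  refine h.apply_rightInverse_eq_of_ae hw hwΩ (isOpen_Ioo.prod hB) hgΩ hg
    (fun a ha => ⟨ha, hbB⟩) ?_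
  filter_upwards [hb] with a ha haI
  by_contra hnot
  exact ha ⟨g (a, b), ⟨hgΩ ⟨haI, hbB⟩, hnot⟩, hg _ ⟨haI, hbB⟩⟩

theorem eqOn_of_ae_apply_rightInverse_eq {B : Set ℝ} (h : IsMonotoneCoordinatePair Ω u v)
    (hw : MonotoneOn w Ω) (hwΩ : MapsTo w Ω (Icc a₀ a₁)) (hB : IsOpen B)
    (hΦ : ∀ p ∈ Ω, (u p, v p) ∈ Ioo a₀ a₁ ×ˢ B) (hgΩ : MapsTo g (Ioo a₀ a₁ ×ˢ B) Ω)
    (hg : ∀ z ∈ Ioo a₀ a₁ ×ˢ B, (u (g z), v (g z)) = z)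
    (hgood : ∀ᵐ b, b ∈ B → ∀ a ∈ Ioo a₀ a₁, w (g (a, b)) = a) : EqOn w u Ω := by
  intro p hp
  obtain ⟨hup, hvp⟩ := hΦ p hp
  have hgc := h.continuousOn_of_rightInverse hgΩ hg
  have hq : ∀ a ∈ Ioo a₀ a₁, g (a, v p) ∈ Ω ∧ u (g (a, v p)) = a ∧ v (g (a, v p)) = v p :=
    fun a ha => ⟨hgΩ ⟨ha, hvp⟩, congrArg Prod.fst (hg (a, v p) ⟨ha, hvp⟩),
      congrArg Prod.snd (hg (a, v p) ⟨ha, hvp⟩)⟩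
  apply le_antisymm
  · refine le_of_forall_gt_imp_ge_of_dense fun a hpa => ?_
    rcases lt_or_ge a a₁ with ha₁ | ha₁
    · have ha : a ∈ Ioo a₀ a₁ := ⟨hup.1.trans hpa, ha₁⟩
      obtain ⟨hqΩ, hqu, hqv⟩ := hq a ha
      obtain ⟨q, ⟨hpq, hqΩ'⟩, rfl⟩ := exists_mem_apply_eq_of_ae (O := {q | p.1 < q.1 ∧ p.2 < q.2})
        hB ha hvp hgc hgΩ hgood (((isOpen_lt continuous_const continuous_fst).inter
          (isOpen_lt continuous_const continuous_snd)).mem_nhds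
          (fst_lt_and_snd_lt_of_lt_of_eq h.isOpen h.monotoneOn_u h.v_le h.v_deriv hp hqΩ
            (by rwa [hqu]) hqv.symm))
      exact hw hp hqΩ' ⟨hpq.1.le, hpq.2.le⟩
    · exact (hwΩ hp).2.trans ha₁
  · refine le_of_forall_lt_imp_le_of_dense fun a hap => ?_
    rcases lt_or_ge a₀ a with ha₀ | ha₀
    · have ha : a ∈ Ioo a₀ a₁ := ⟨ha₀, hap.trans hup.2⟩
      obtain ⟨hqΩ, hqu, hqv⟩ := hq a ha
      obtain ⟨q, ⟨hqp, hqΩ'⟩, rfl⟩ := exists_mem_apply_eq_of_ae (O := {q | q.1 < p.1 ∧ q.2 < p.2})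
        hB ha hvp hgc hgΩ hgood (((isOpen_lt continuous_fst continuous_const).inter
          (isOpen_lt continuous_snd continuous_const)).mem_nhds
          (fst_lt_and_snd_lt_of_lt_of_eq h.isOpen h.monotoneOn_u h.v_le h.v_deriv hqΩ hp
            (by rwa [hqu]) hqv))
      exact hw hqΩ' hp ⟨hqp.1.le, hqp.2.le⟩
    · exact ha₀.trans (hwΩ hp).1

end IsMonotoneCoordinatePair

end MonotoneCoordinates

theorem stmt17_general (Ω : Set (ℝ × ℝ)) (hΩ : IsOpen Ω) (c d : ℝ) (u v : ℝ × ℝ → ℝ)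
    (humono : ∀ p ∈ Ω, ∀ q ∈ Ω, p.1 ≤ q.1 → p.2 ≤ q.2 → u p ≤ u q)
    (hvmono : ∀ p ∈ Ω, ∀ q ∈ Ω, q.1 ≤ p.1 → p.2 ≤ q.2 → v p ≤ v q)
    (hudiff : ∀ p ∈ Ω, DifferentiableAt ℝ u p ∧
      0 < fderiv ℝ u p (1, 0) ∧ 0 < fderiv ℝ u p (0, 1))
    (hvdiff : ∀ p ∈ Ω, DifferentiableAt ℝ v p ∧
      fderiv ℝ v p (1, 0) < 0 ∧ 0 < fderiv ℝ v p (0, 1))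
    (himage : (fun p => (u p, v p)) '' Ω = Set.Ioo (-c) c ×ˢ Set.Ioo (-d) d)
    (w : ℝ × ℝ → ℝ)
    (hwval : ∀ p ∈ Ω, w p ∈ Set.Icc (-c) c)
    (hwmono : ∀ p ∈ Ω, ∀ q ∈ Ω, p.1 ≤ q.1 → p.2 ≤ q.2 → w p ≤ w q)
    (hwderiv : ∀ᵐ p ∂(volume.restrict Ω), DifferentiableAt ℝ w p ∧
      fderiv ℝ w p (1, 0) = fderiv ℝ u p (1, 0) ∧
      fderiv ℝ w p (0, 1) = fderiv ℝ u p (0, 1)) :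
    ∀ p ∈ Ω, w p = u p := by
  have h : IsMonotoneCoordinatePair Ω u v :=
    ⟨hΩ, fun p hp q hq hpq => humono p hp q hq hpq.1 hpq.2, hvmono, hudiff, hvdiff⟩
  have hw : MonotoneOn w Ω := fun p hp q hq hpq => hwmono p hp q hq hpq.1 hpq.2
  have hΦ : ∀ p ∈ Ω, (u p, v p) ∈ Ioo (-c) c ×ˢ Ioo (-d) d :=
    fun p hp => himage ▸ mem_image_of_mem _ hp
  choose! g hgΩ hg using fun z (hz : z ∈ Ioo (-c) c ×ˢ Ioo (-d) d) =>
    (himage ▸ hz : z ∈ (fun p => (u p, v p)) '' Ω)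
  have hwd : ∀ᵐ p ∂volume.restrict Ω, HasFDerivAt w (fderiv ℝ u p) p := hwderiv.mono
    fun p hp => ContinuousLinearMap.ext_prod_real hp.2.1 hp.2.2 ▸ hp.1.hasFDerivAt
  exact h.eqOn_of_ae_apply_rightInverse_eq hw hwval isOpen_Ioo hΦ hgΩ hg
    (h.ae_apply_rightInverse_eq hw hwval isOpen_Ioo hgΩ hg hwd)

/-- Uniqueness from derivatives: with `u` doubly increasing, `v` decreasing in `x`
and increasing in `y`, both everywhere differentiable with nonzero partial
derivatives on an open set `Ω` and `(u,v)` surjective onto `(-c,c) × (-d,d)`, any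
doubly increasing `w : Ω → [-c,c]` whose partial derivatives agree with those of `u`
almost everywhere equals `u` everywhere. -/
theorem stmt17 (Ω : Set (ℝ × ℝ)) (hΩ : IsOpen Ω) (c d : ℝ) (hc : 0 < c)
    (hd : 0 < d) (u v : ℝ × ℝ → ℝ)
    (huval : ∀ p ∈ Ω, u p ∈ Set.Icc (-c) c)
    (hvval : ∀ p ∈ Ω, v p ∈ Set.Icc (-d) d)
    (humono : ∀ p ∈ Ω, ∀ q ∈ Ω, p.1 ≤ q.1 → p.2 ≤ q.2 → u p ≤ u q)
    (hvmono : ∀ p ∈ Ω, ∀ q ∈ Ω, q.1 ≤ p.1 → p.2 ≤ q.2 → v p ≤ v q)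
    (hudiff : ∀ p ∈ Ω, DifferentiableAt ℝ u p ∧
      0 < fderiv ℝ u p (1, 0) ∧ 0 < fderiv ℝ u p (0, 1))
    (hvdiff : ∀ p ∈ Ω, DifferentiableAt ℝ v p ∧
      fderiv ℝ v p (1, 0) < 0 ∧ 0 < fderiv ℝ v p (0, 1))
    (himage : (fun p => (u p, v p)) '' Ω = Set.Ioo (-c) c ×ˢ Set.Ioo (-d) d)
    (w : ℝ × ℝ → ℝ)
    (hwval : ∀ p ∈ Ω, w p ∈ Set.Icc (-c) c)
    (hwmono : ∀ p ∈ Ω, ∀ q ∈ Ω, p.1 ≤ q.1 → p.2 ≤ q.2 → w p ≤ w q)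
    (hwderiv : ∀ᵐ p ∂(volume.restrict Ω), DifferentiableAt ℝ w p ∧
      fderiv ℝ w p (1, 0) = fderiv ℝ u p (1, 0) ∧
      fderiv ℝ w p (0, 1) = fderiv ℝ u p (0, 1)) :
    ∀ p ∈ Ω, w p = u p :=
  stmt17_general Ω hΩ c d u v humono hvmono hudiff hvdiff himage w hwval hwmono hwderiv
end

section
/- Let λ^{(γ)} (γ > 0) be a family of random Young diagrams with column lengths λ^{(γ)}_1 ≥ λ^{(γ)}_2 ≥ …, and set Λ^{(γ)}_k = Σ_{i=1}^k λ^{(γ)}_i. Let a, b be positive functions of γ with a(γ) → ∞ as γ → ∞. Suppose there is a deterministic G : ℝ_{≥0} → ℝ_{≥0} such that b(γ)·Λ^{(γ)}_{⌊a(γ)r⌋} → G(r) in probability for every r ≥ 0. Then G is increasing and concave, and for every r > 0 where G is differentiable, a(γ)·b(γ)·λ^{(γ)}_{⌊a(γ)r⌋+1} → G'(r) in probability. -/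
/-!
Convergence in probability to a constant is ordinary convergence along the filter
`inProbability μ atTop` on pairs `(γ, ω)`, so everything reduces to limits of deterministic
inequalities along a filter. Since the columns decrease, the `m - k` columns with indices in
`[k, m)` sum to at least `m - k` times the last and at most `m - k` times the first of them.
Scaled by `b`, and with `⌊a t⌋₊ / a → t`, this gives in the limit monotonicity of `G`, the
three-slope inequality of a concave function, and
`(G (r + h) - G r) / h ≲ a b λ_{⌊a r⌋₊ + 1} ≲ (G r - G (r - h)) / h` for every `h > 0`;
letting `h → 0` squeezes the scaled column to `G' r`.
-/

open Set Filter MeasureTheory Finset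

namespace MeasureTheory

variable {ι α : Type*} [MeasurableSpace α]

def inProbability (μ : Measure α) (l : Filter ι) : Filter (ι × α) where
  sets := {S | Tendsto (fun i => μ {ω | (i, ω) ∉ S}) l (nhds 0)}
  univ_sets := by simpa using tendsto_const_nhds
  sets_of_superset {S T} hS hST :=
    tendsto_of_tendsto_of_tendsto_of_le_of_le tendsto_const_nhds hS (fun _ => zero_le)
      fun _ => measure_mono fun _ hω hT => hω (hST hT)
  inter_sets {S T} hS hT := by
    refine tendsto_of_tendsto_of_tendsto_of_le_of_le tendsto_const_nhds
      (by simpa using hS.add hT) (fun _ => zero_le) fun i => ?_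
    refine (measure_mono fun ω hω => ?_).trans (measure_union_le _ _)
    exact not_and_or.1 hω

variable {μ : Measure α} {l : Filter ι}

theorem mem_inProbability {S : Set (ι × α)} :
    S ∈ inProbability μ l ↔ Tendsto (fun i => μ {ω | (i, ω) ∉ S}) l (nhds 0) :=
  Iff.rfl

instance [NeZero μ] [l.NeBot] : (inProbability μ l).NeBot := by
  refine ⟨fun h => NeZero.ne μ ?_⟩
  have h' : Tendsto (fun _ => μ univ) l (nhds 0) := by
    simpa [mem_inProbability] using (Filter.empty_mem_iff_bot.2 h)
  exact Measure.measure_univ_eq_zero.1 (tendsto_nhds_unique tendsto_const_nhds h')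

theorem tendsto_fst_inProbability : Tendsto Prod.fst (inProbability μ l) l := by
  intro S hS
  refine tendsto_const_nhds.congr' ?_
  filter_upwards [hS] with i hi
  simp [hi]

theorem tendsto_inProbability_iff {E : Type*} [PseudoMetricSpace E] {X : ι → α → E} {c : E} :
    Tendsto (fun p : ι × α => X p.1 p.2) (inProbability μ l) (nhds c) ↔
      ∀ ε > 0, Tendsto (fun i => μ {ω | ε ≤ dist (X i ω) c}) l (nhds 0) := by
  simp only [Metric.tendsto_nhds, Filter.Eventually, mem_inProbability, Set.mem_ofPred_eq, not_lt]

end MeasureTheory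

namespace Antitone

variable {f : ℕ → ℝ} {k m : ℕ}

theorem sub_mul_le_sum_Ico (hf : Antitone f) (hkm : k ≤ m) :
    ((m : ℝ) - k) * f m ≤ ∑ i ∈ Ico k m, f i := by
  have := card_nsmul_le_sum (Ico k m) f (f m) fun i hi => hf (mem_Ico.1 hi).2.le
  rwa [Nat.card_Ico, nsmul_eq_mul, Nat.cast_sub hkm] at this

theorem sum_Ico_le_sub_mul (hf : Antitone f) (hkm : k ≤ m) :
    ∑ i ∈ Ico k m, f i ≤ ((m : ℝ) - k) * f k := by
  have := sum_le_card_nsmul (Ico k m) f (f k) fun i hi => hf (mem_Ico.1 hi).1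
  rwa [Nat.card_Ico, nsmul_eq_mul, Nat.cast_sub hkm] at this

end Antitone

theorem tendsto_of_forall_eventually_le_of_forall_eventually_ge {β : Type*} {F : Filter β}
    {k : Filter ℝ} [k.NeBot] {D : β → ℝ} {u v : ℝ → ℝ} {L : ℝ}
    (hu : Tendsto u k (nhds L)) (hv : Tendsto v k (nhds L))
    (hupper : ∀ᶠ h in k, ∃ U : β → ℝ, Tendsto U F (nhds (u h)) ∧ D ≤ᶠ[F] U)
    (hlower : ∀ᶠ h in k, ∃ V : β → ℝ, Tendsto V F (nhds (v h)) ∧ V ≤ᶠ[F] D) :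
    Tendsto D F (nhds L) := by
  refine tendsto_order.2 ⟨fun L' hL' => ?_, fun L' hL' => ?_⟩
  · obtain ⟨h, hvh, V, hV, hVD⟩ := ((hv.eventually_const_lt hL').and hlower).exists
    filter_upwards [hV.eventually_const_lt hvh, hVD] with p hp hp' using hp.trans_le hp'
  · obtain ⟨h, huh, U, hU, hDU⟩ := ((hu.eventually_lt_const hL').and hupper).exists
    filter_upwards [hU.eventually_lt_const huh, hDU] with p hp hp' using hp'.trans_lt hp

section ScaledPartialSum

variable {β : Type*} {F : Filter β} {A B : β → ℝ} {f : β → ℕ → ℝ} {G : ℝ → ℝ}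

noncomputable def scaledPartialSum (A B : β → ℝ) (f : β → ℕ → ℝ) (t : ℝ) (p : β) : ℝ :=
  B p * ∑ i ∈ range ⌊A p * t⌋₊, f p i

theorem scaledPartialSum_sub {p : β} {s t : ℝ} (hA : 0 ≤ A p) (hst : s ≤ t) :
    scaledPartialSum A B f t p - scaledPartialSum A B f s p =
      B p * ∑ i ∈ Ico ⌊A p * s⌋₊ ⌊A p * t⌋₊, f p i := by
  rw [scaledPartialSum, scaledPartialSum, ← mul_sub,
    sum_Ico_eq_sub _ (Nat.floor_le_floor (mul_le_mul_of_nonneg_left hst hA))]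

theorem sub_mul_le_scaledPartialSum_sub {p : β} {s t : ℝ} (hA : 0 ≤ A p) (hB : 0 ≤ B p)
    (hf : Antitone (f p)) (hst : s ≤ t) :
    ((⌊A p * t⌋₊ : ℝ) - ⌊A p * s⌋₊) * (B p * f p ⌊A p * t⌋₊) ≤
      scaledPartialSum A B f t p - scaledPartialSum A B f s p := by
  rw [scaledPartialSum_sub hA hst, mul_left_comm]
  exact mul_le_mul_of_nonneg_left
    (hf.sub_mul_le_sum_Ico (Nat.floor_le_floor (mul_le_mul_of_nonneg_left hst hA))) hB

theorem scaledPartialSum_sub_le_sub_mul {p : β} {s t : ℝ} (hA : 0 ≤ A p) (hB : 0 ≤ B p)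
    (hf : Antitone (f p)) (hst : s ≤ t) :
    scaledPartialSum A B f t p - scaledPartialSum A B f s p ≤
      ((⌊A p * t⌋₊ : ℝ) - ⌊A p * s⌋₊) * (B p * f p ⌊A p * s⌋₊) := by
  rw [scaledPartialSum_sub hA hst, mul_left_comm]
  exact mul_le_mul_of_nonneg_left
    (hf.sum_Ico_le_sub_mul (Nat.floor_le_floor (mul_le_mul_of_nonneg_left hst hA))) hB

theorem tendsto_natFloor_mul_sub_natFloor_mul_div (hA : Tendsto A F atTop) {s t : ℝ}
    (hs : 0 ≤ s) (hst : s ≤ t) :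
    Tendsto (fun p => ((⌊A p * t⌋₊ : ℝ) - ⌊A p * s⌋₊) / A p) F (nhds (t - s)) := by
  have floor_div {t : ℝ} (ht : 0 ≤ t) : Tendsto (fun p => (⌊A p * t⌋₊ : ℝ) / A p) F (nhds t) := by
    simpa only [Function.comp_def, mul_comm] using (tendsto_nat_floor_mul_div_atTop ht).comp hA
  simpa only [sub_div] using (floor_div (hs.trans hst)).sub (floor_div hs)

theorem monotoneOn_of_tendsto_scaledPartialSum [F.NeBot] (hA : Tendsto A F atTop)
    (hB : ∀ p, 0 ≤ B p) (hG : ∀ t ≥ 0, Tendsto (scaledPartialSum A B f t) F (nhds (G t)))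
    (hf_nonneg : ∀ p i, 0 ≤ f p i) :
    MonotoneOn G (Ici 0) := by
  intro x hx y hy hxy
  refine le_of_tendsto_of_tendsto (hG x hx) (hG y hy) ?_
  filter_upwards [hA.eventually_ge_atTop 0] with p hp
  rw [← sub_nonneg, scaledPartialSum_sub hp hxy]
  exact mul_nonneg (hB p) (sum_nonneg fun i _ => hf_nonneg p i)

theorem concaveOn_of_tendsto_scaledPartialSum [F.NeBot] (hA : Tendsto A F atTop)
    (hB : ∀ p, 0 ≤ B p) (hG : ∀ t ≥ 0, Tendsto (scaledPartialSum A B f t) F (nhds (G t)))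
    (hf : ∀ p, Antitone (f p)) :
    ConcaveOn ℝ (Ici 0) G := by
  refine concaveOn_of_slope_anti_adjacent (convex_Ici 0) fun {x y z} hx hz hxy hyz => ?_
  have hy : (0 : ℝ) ≤ y := le_trans hx hxy.le
  rw [div_le_div_iff₀ (sub_pos.2 hyz) (sub_pos.2 hxy)]
  refine le_of_tendsto_of_tendsto
    (((hG z hz).sub (hG y hy)).mul (tendsto_natFloor_mul_sub_natFloor_mul_div hA hx hxy.le))
    (((hG y hy).sub (hG x hx)).mul (tendsto_natFloor_mul_sub_natFloor_mul_div hA hy hyz.le)) ?_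
  filter_upwards [hA.eventually_gt_atTop 0] with p hp
  have hgap {s t : ℝ} (hst : s ≤ t) : 0 ≤ ((⌊A p * t⌋₊ : ℝ) - ⌊A p * s⌋₊) / A p :=
    div_nonneg (sub_nonneg.2 (Nat.cast_le.2 (Nat.floor_le_floor
      (mul_le_mul_of_nonneg_left hst hp.le)))) hp.le
  calc _ ≤ _ := mul_le_mul_of_nonneg_right
        (scaledPartialSum_sub_le_sub_mul hp.le (hB p) (hf p) hyz.le) (hgap hxy.le)
    _ = ((⌊A p * y⌋₊ : ℝ) - ⌊A p * x⌋₊) * (B p * f p ⌊A p * y⌋₊) *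
          (((⌊A p * z⌋₊ : ℝ) - ⌊A p * y⌋₊) / A p) := by ring
    _ ≤ _ := mul_le_mul_of_nonneg_right
        (sub_mul_le_scaledPartialSum_sub hp.le (hB p) (hf p) hxy.le) (hgap hyz.le)

theorem tendsto_mul_of_tendsto_scaledPartialSum (hA : Tendsto A F atTop) (hB : ∀ p, 0 ≤ B p)
    (hG : ∀ t ≥ 0, Tendsto (scaledPartialSum A B f t) F (nhds (G t)))
    (hf : ∀ p, Antitone (f p)) {r L : ℝ} (hr : 0 < r) (hL : HasDerivAt G L r) :
    Tendsto (fun p => A p * B p * f p ⌊A p * r⌋₊) F (nhds L) := by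
  have hgap {s t : ℝ} (hs : 0 ≤ s) (hst : s < t) :
      ∀ᶠ p in F, 0 < ((⌊A p * t⌋₊ : ℝ) - ⌊A p * s⌋₊) / A p :=
    (tendsto_natFloor_mul_sub_natFloor_mul_div hA hs hst.le).eventually_const_lt (sub_pos.2 hst)
  have hleft : Tendsto (fun h => (G r - G (r - h)) / h) (nhdsWithin 0 (Ioi 0)) (nhds L) := by
    have hneg : Tendsto (fun h : ℝ => -h) (nhdsWithin 0 (Ioi 0)) (nhdsWithin 0 (Iio 0)) := by
      simpa using tendsto_neg_nhdsGT_neg (a := (0 : ℝ))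
    refine (hL.tendsto_slope_zero_left.comp hneg).congr fun h => ?_
    simp only [Function.comp_apply, smul_eq_mul, inv_neg, ← sub_eq_add_neg]
    ring
  have hright : Tendsto (fun h => (G (r + h) - G r) / h) (nhdsWithin 0 (Ioi 0)) (nhds L) :=
    hL.tendsto_slope_zero_right.congr fun h => by rw [smul_eq_mul, div_eq_inv_mul]
  refine tendsto_of_forall_eventually_le_of_forall_eventually_ge hleft hright ?_ ?_
  · filter_upwards [Ioo_mem_nhdsGT hr] with h ⟨hh, hhr⟩
    have hrh : 0 ≤ r - h := by linarith
    refine ⟨fun p => (scaledPartialSum A B f r p - scaledPartialSum A B f (r - h) p) /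
      (((⌊A p * r⌋₊ : ℝ) - ⌊A p * (r - h)⌋₊) / A p), ?_, ?_⟩
    · simpa only [sub_sub_cancel, Pi.div_def] using ((hG r hr.le).sub (hG (r - h) hrh)).div
        (tendsto_natFloor_mul_sub_natFloor_mul_div hA hrh (sub_le_self r hh.le))
        (by simpa using hh.ne')
    filter_upwards [hA.eventually_gt_atTop 0, hgap hrh (sub_lt_self r hh)] with p hp hgp
    rw [le_div_iff₀ hgp]
    calc A p * B p * f p ⌊A p * r⌋₊ * (((⌊A p * r⌋₊ : ℝ) - ⌊A p * (r - h)⌋₊) / A p)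
        = ((⌊A p * r⌋₊ : ℝ) - ⌊A p * (r - h)⌋₊) * (B p * f p ⌊A p * r⌋₊) := by field_simp
      _ ≤ _ := sub_mul_le_scaledPartialSum_sub hp.le (hB p) (hf p) (sub_le_self r hh.le)
  · filter_upwards [self_mem_nhdsWithin] with h (hh : 0 < h)
    refine ⟨fun p => (scaledPartialSum A B f (r + h) p - scaledPartialSum A B f r p) /
      (((⌊A p * (r + h)⌋₊ : ℝ) - ⌊A p * r⌋₊) / A p), ?_, ?_⟩
    · simpa only [add_sub_cancel_left, Pi.div_def] using
        ((hG (r + h) (by positivity)).sub (hG r hr.le)).div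
          (tendsto_natFloor_mul_sub_natFloor_mul_div hA hr.le (le_add_of_nonneg_right hh.le))
          (by simpa using hh.ne')
    filter_upwards [hA.eventually_gt_atTop 0, hgap hr.le (lt_add_of_pos_right r hh)] with p hp hgp
    rw [div_le_iff₀ hgp]
    calc _ ≤ ((⌊A p * (r + h)⌋₊ : ℝ) - ⌊A p * r⌋₊) * (B p * f p ⌊A p * r⌋₊) :=
          scaledPartialSum_sub_le_sub_mul hp.le (hB p) (hf p) (le_add_of_nonneg_right hh.le)
      _ = A p * B p * f p ⌊A p * r⌋₊ * (((⌊A p * (r + h)⌋₊ : ℝ) - ⌊A p * r⌋₊) / A p) := by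
          field_simp

end ScaledPartialSum

theorem stmt18_general {α : Type*} [MeasurableSpace α] (μ : Measure α)
    [IsProbabilityMeasure μ] (l : ℝ → α → ℕ → ℕ)
    (hyoung : ∀ γ ω, Antitone (l γ ω))
    (a b : ℝ → ℝ) (hbpos : ∀ γ, 0 < b γ)
    (hatop : Tendsto a atTop atTop)
    (G : ℝ → ℝ)
    (hconv : ∀ r ≥ (0 : ℝ), ∀ ε > (0 : ℝ),
      Tendsto (fun γ => μ {ω |
          ε ≤ |b γ * (∑ i ∈ Finset.range ⌊a γ * r⌋₊, (l γ ω i : ℝ)) - G r|})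
        atTop (nhds 0)) :
    MonotoneOn G (Set.Ici 0) ∧ ConcaveOn ℝ (Set.Ici 0) G ∧
    ∀ r > (0 : ℝ), ∀ L : ℝ, HasDerivAt G L r → ∀ ε > (0 : ℝ),
      Tendsto (fun γ => μ {ω |
          ε ≤ |a γ * b γ * (l γ ω ⌊a γ * r⌋₊ : ℝ) - L|})
        atTop (nhds 0) := by
  have hA : Tendsto (fun p : ℝ × α => a p.1) (inProbability μ atTop) atTop :=
    hatop.comp tendsto_fst_inProbability
  have hB (p : ℝ × α) : 0 ≤ b p.1 := (hbpos p.1).le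
  have hf (p : ℝ × α) : Antitone fun i => (l p.1 p.2 i : ℝ) :=
    Nat.mono_cast.comp_antitone (hyoung p.1 p.2)
  have hG (t : ℝ) (ht : 0 ≤ t) : Tendsto (scaledPartialSum (fun p => a p.1) (fun p => b p.1)
      (fun p i => (l p.1 p.2 i : ℝ)) t) (inProbability μ atTop) (nhds (G t)) :=
    (tendsto_inProbability_iff (c := G t)
      (X := fun γ ω => b γ * ∑ i ∈ range ⌊a γ * t⌋₊, (l γ ω i : ℝ))).2
      (by simpa only [Real.dist_eq] using hconv t ht)
  refine ⟨monotoneOn_of_tendsto_scaledPartialSum hA hB hG fun _ _ => Nat.cast_nonneg _,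
    concaveOn_of_tendsto_scaledPartialSum hA hB hG hf, fun r hr L hL ε hε => ?_⟩
  have hD := (tendsto_inProbability_iff (c := L)
    (X := fun γ ω => a γ * b γ * (l γ ω ⌊a γ * r⌋₊ : ℝ))).1
    (tendsto_mul_of_tendsto_scaledPartialSum hA hB hG hf hr hL)
  simpa only [Real.dist_eq] using hD ε hε

/-- If the scaled partial sums `b(γ)·Λ^{(γ)}_{⌊a(γ)r⌋}` of the column lengths of a
family of random Young diagrams converge in probability to a deterministic
`G(r) ≥ 0` for every `r ≥ 0`, then `G` is increasing and concave, and at every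
`r > 0` where `G` is differentiable (with derivative `L`), the scaled column
lengths `a(γ)·b(γ)·λ^{(γ)}_{⌊a(γ)r⌋+1}` converge to `L` in probability.
Here `l γ ω i` denotes the `(i+1)`-st column length `λ^{(γ)}_{i+1}`. -/
theorem stmt18 {α : Type*} [MeasurableSpace α] (μ : Measure α)
    [IsProbabilityMeasure μ] (l : ℝ → α → ℕ → ℕ)
    (hyoung : ∀ γ ω, Antitone (l γ ω))
    (a b : ℝ → ℝ) (hapos : ∀ γ, 0 < a γ) (hbpos : ∀ γ, 0 < b γ)
    (hatop : Tendsto a atTop atTop)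
    (G : ℝ → ℝ) (hGpos : ∀ r ≥ (0 : ℝ), 0 ≤ G r)
    (hconv : ∀ r ≥ (0 : ℝ), ∀ ε > (0 : ℝ),
      Tendsto (fun γ => μ {ω |
          ε ≤ |b γ * (∑ i ∈ Finset.range ⌊a γ * r⌋₊, (l γ ω i : ℝ)) - G r|})
        atTop (nhds 0)) :
    MonotoneOn G (Set.Ici 0) ∧ ConcaveOn ℝ (Set.Ici 0) G ∧
    ∀ r > (0 : ℝ), ∀ L : ℝ, HasDerivAt G L r → ∀ ε > (0 : ℝ),
      Tendsto (fun γ => μ {ω |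
          ε ≤ |a γ * b γ * (l γ ω ⌊a γ * r⌋₊ : ℝ) - L|})
        atTop (nhds 0) :=
  stmt18_general μ l hyoung a b hbpos hatop G hconv
end
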